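/- arXiv:2008.13079 — 4 statements merged into one kernel-verified Lean document; each statement's English description precedes it below -/
import Mathlib

section
/- Let φ ∈ 𝒟(ℒ), f = ℒ(φ), h > 0, and s ∈ ℂ with Re(s) > 1. Then the Bernoulli series (B_h f_{−s})(t) = Σ_{n=0}^∞ (−1)^n (Δ_h^n f_{−s})(t)/(n+1) converges absolutely and locally uniformly on (0,∞), and for every t > 0 one has (B_h f_{−s})(t) = (1/Γ(s)) ∫₀^∞ e^{−tu} (hu/(1−e^{−hu})) φ(u) u^{s−1} du; moreover, for each fixed t > 0, s ↦ (B_h f_{−s})(t) is holomorphic on {Re(s) > 1}. -/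
open MeasureTheory Filter Set

noncomputable section

/-- The Laplace transform `ℒ(φ)(t) = ∫₀^∞ e^{−tu} φ(u) du`. -/
def Lap (φ : ℝ → ℂ) (t : ℝ) : ℂ :=
  ∫ u in Ioi (0:ℝ), Complex.exp (-(t * u : ℝ)) * φ u

/-- Membership in the domain `𝒟(ℒ)` of the Laplace transform:
measurable, integrable on `(0,R)` for all `R > 0`, and
`∫₀^∞ e^{−xu} |φ(u)| du < ∞` for every `x > 0`. -/
def MemDL (φ : ℝ → ℂ) : Prop :=
  Measurable φ ∧
  (∀ R > 0, IntegrableOn φ (Ioo 0 R)) ∧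
  (∀ x > 0, IntegrableOn (fun u => Real.exp (-(x * u)) * ‖φ u‖) (Ioi 0))

/-- The forward difference operator with step `h`: `(Δ_h f)(t) = f(t+h) − f(t)`. -/
def Dh (h : ℝ) (f : ℝ → ℂ) : ℝ → ℂ := fun t => f (t + h) - f t

/-- The `n`-th term of the Bernoulli-operator series: `(−1)^n (Δ_h^n f)(t)/(n+1)`. -/
def BTerm (h : ℝ) (f : ℝ → ℂ) (n : ℕ) (t : ℝ) : ℂ :=
  ((-1 : ℂ) ^ n / (n + 1)) * (Dh h)^[n] f t

/-- The Bernoulli operator `(B_h f)(t) = Σ_{n≥0} (−1)^n (Δ_h^n f)(t)/(n+1)`. -/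
def Bop (h : ℝ) (f : ℝ → ℂ) (t : ℝ) : ℂ := ∑' n : ℕ, BTerm h f n t

/-- Generalized binomial coefficient `binom(h,n) = h(h−1)⋯(h−n+1)/n!`. -/
def gbinom (h : ℝ) (n : ℕ) : ℝ :=
  (∏ i ∈ Finset.range n, (h - i)) / n.factorial

/-- The `n`-th term of the Newton series: `binom(h,n) (Δ^n f)(t)`. -/
def NTerm (h : ℝ) (f : ℝ → ℂ) (n : ℕ) (t : ℝ) : ℂ :=
  (gbinom h n : ℂ) * (Dh 1)^[n] f t

/-- The fractional shift `(E^h f)(t) = Σ_{n≥0} binom(h,n) (Δ^n f)(t)`. -/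
def Nop (h : ℝ) (f : ℝ → ℂ) (t : ℝ) : ℂ := ∑' n : ℕ, NTerm h f n t

/-- The series `Σ g n` converges absolutely (pointwise on `S`) and its partial sums
converge locally uniformly on `S`. -/
def ALUOn (g : ℕ → ℝ → ℂ) (S : Set ℝ) : Prop :=
  (∀ t ∈ S, Summable fun n : ℕ => ‖g n t‖) ∧
  TendstoLocallyUniformlyOn (fun N t => ∑ n ∈ Finset.range N, g n t)
    (fun t => ∑' n : ℕ, g n t) atTop S

/-- The Laplace–Mellin transform `f_{−s}(t) = (1/Γ(s)) ∫₀^∞ e^{−tu} φ(u) u^{s−1} du`. -/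
def LM (φ : ℝ → ℂ) (s : ℂ) (t : ℝ) : ℂ :=
  (1 / Complex.Gamma s) *
    ∫ u in Ioi (0:ℝ), Complex.exp (-(t * u : ℝ)) * φ u * (u : ℂ) ^ (s - 1)

/-- `φ(u) = o(u^γ)` as `u → 0⁺`, i.e. `|φ(u)| u^{−Re γ} → 0`. -/
def SmallO (φ : ℝ → ℂ) (γ : ℂ) : Prop :=
  Tendsto (fun u : ℝ => ‖φ u‖ * u ^ (-γ.re)) (nhdsWithin 0 (Ioi 0)) (nhds 0)

/-- Membership in `𝒟^ι(ℒ)`: `φ ∈ 𝒟(ℒ)` dominated by a nondecreasing `ψ ∈ 𝒟(ℒ)`. -/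
def MemDLi (φ : ℝ → ℂ) : Prop :=
  MemDL φ ∧ ∃ ψ : ℝ → ℝ, MemDL (fun u => (ψ u : ℂ)) ∧ MonotoneOn ψ (Ioi 0) ∧
    ∀ u ∈ Ioi (0:ℝ), ‖φ u‖ ≤ ψ u

/-- Membership in the class `ℋ`, with the witness `φ` recorded:
(1) `t ↦ f(s,t)` differentiable on `(0,∞)`;
(2) `s ↦ f(s,t)` and `s ↦ ∂ₜf(s,t)` entire;
(3) `f(−1,·) = ℒ(φ)` with `φ ∈ 𝒟^ι(ℒ)`;
(4) `f(−s,t)` is the Laplace–Mellin transform of `φ` for `Re s > 1`. -/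
def MemHwith (f : ℂ → ℝ → ℂ) (φ : ℝ → ℂ) : Prop :=
  (∀ s : ℂ, ∀ t ∈ Ioi (0:ℝ), DifferentiableAt ℝ (f s) t) ∧
  (∀ t ∈ Ioi (0:ℝ), Differentiable ℂ fun s => f s t) ∧
  (∀ t ∈ Ioi (0:ℝ), Differentiable ℂ fun s => deriv (f s) t) ∧
  MemDLi φ ∧
  (∀ t ∈ Ioi (0:ℝ), f (-1) t = Lap φ t) ∧
  (∀ s : ℂ, 1 < s.re → ∀ t ∈ Ioi (0:ℝ), f (-s) t = LM φ s t)

/-- Membership in the class `ℋ`. -/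
def MemH (f : ℂ → ℝ → ℂ) : Prop := ∃ φ : ℝ → ℂ, MemHwith f φ

/-- The Hurwitz zeta function `ζ(s,x)` for real `x > 0`: the meromorphic continuation in `s`
of `Σ_{k≥0} (k+x)^{−s}`, expressed via Mathlib's `HurwitzZeta.hurwitzZeta` on `ℝ/ℤ`. -/
def hurwitz (s : ℂ) (x : ℝ) : ℂ :=
  HurwitzZeta.hurwitzZeta (↑x : UnitAddCircle) s -
    ∑ k ∈ Finset.range ⌊x⌋₊,
      (if (k : ℝ) + Int.fract x = 0 then 0
       else (((k : ℝ) + Int.fract x : ℝ) : ℂ) ^ (-s))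

end


/-- `u^c e^{-xu}` is bounded on `(0,∞)` for `c ≥ 0`, `x > 0`. -/
lemma S7.lemA {c x : ℝ} (hc : 0 ≤ c) (hx : 0 < x) :
    ∃ C, ∀ u ∈ Ioi (0:ℝ), u ^ c * Real.exp (-(x * u)) ≤ C := by
  rcases eq_or_lt_of_le hc with rfl | hc
  · exact ⟨1, fun u hu => by
      rw [Real.rpow_zero, one_mul]
      exact (Real.exp_le_one_iff.2 (by nlinarith [mem_Ioi.1 hu])).trans le_rfl⟩
  · refine ⟨(c / x) ^ c * Real.exp (-c), fun u hu => ?_⟩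
    have hu : (0:ℝ) < u := hu
    have h1 : x * u / c ≤ Real.exp (x * u / c - 1) := by
      have := Real.add_one_le_exp (x * u / c - 1)
      linarith
    have h2 : u ≤ c / x * Real.exp (x * u / c - 1) := by
      rw [div_mul_eq_mul_div, le_div_iff₀ hx]
      have h5 := mul_le_mul_of_nonneg_left h1 hc.le
      have h6 : c * (x * u / c) = x * u := by field_simp
      nlinarith
    have h3 : u ^ c ≤ (c / x * Real.exp (x * u / c - 1)) ^ c :=
      Real.rpow_le_rpow hu.le h2 hc.le
    have h4 : (c / x * Real.exp (x * u / c - 1)) ^ c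
        = (c / x) ^ c * Real.exp (x * u - c) := by
      rw [Real.mul_rpow (by positivity) (by positivity)]
      congr 1
      rw [← Real.exp_mul]
      congr 1
      field_simp
    calc u ^ c * Real.exp (-(x*u)) ≤ (c/x)^c * Real.exp (x*u - c) * Real.exp (-(x*u)) := by
          apply mul_le_mul_of_nonneg_right _ (Real.exp_pos _).le
          rw [← h4]; exact h3
      _ = (c/x)^c * Real.exp (-c) := by rw [mul_assoc, ← Real.exp_add]; ring_nf

/-- `|log u| ≤ (2/c) u^{-c/2} + u` for `u > 0`, `c > 0`. -/
lemma S7.log_bound {c : ℝ} (hc : 0 < c) :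
    ∀ u ∈ Ioi (0:ℝ), |Real.log u| ≤ 2 / c * u ^ (-(c/2)) + u := by
  intro u hu
  have hu : (0:ℝ) < u := hu
  rcases le_or_gt 1 u with h1 | h1
  · rw [abs_of_nonneg (Real.log_nonneg h1)]
    have := Real.log_le_sub_one_of_pos hu
    have : Real.log u ≤ u := by linarith
    have h2 : (0:ℝ) ≤ 2 / c * u ^ (-(c/2)) := by positivity
    linarith
  · have hlog : Real.log u < 0 := Real.log_neg hu h1
    rw [abs_of_neg hlog]
    have hinv : (0:ℝ) < u⁻¹ := by positivity
    have key : -Real.log u = 2 / c * Real.log (u⁻¹ ^ (c/2)) := by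
      rw [Real.log_rpow hinv, Real.log_inv]
      field_simp
    rw [key]
    have h2 : Real.log (u⁻¹ ^ (c/2)) ≤ u⁻¹ ^ (c/2) - 1 :=
      Real.log_le_sub_one_of_pos (by positivity)
    have h3 : u⁻¹ ^ (c/2) = u ^ (-(c/2)) := by
      rw [Real.inv_rpow hu.le, ← Real.rpow_neg hu.le]
    have h4 : 2 / c * Real.log (u⁻¹ ^ (c/2)) ≤ 2 / c * u ^ (-(c/2)) := by
      apply mul_le_mul_of_nonneg_left _ (by positivity)
      rw [← h3]; linarith
    linarith

/-- `u^c (1+|log u|) e^{-xu}` is bounded on `(0,∞)` for `c > 0`, `x > 0`. -/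
lemma S7.lemB {c x : ℝ} (hc : 0 < c) (hx : 0 < x) :
    ∃ C, ∀ u ∈ Ioi (0:ℝ), u ^ c * (1 + |Real.log u|) * Real.exp (-(x * u)) ≤ C := by
  obtain ⟨C1, hC1⟩ := S7.lemA hc.le hx
  obtain ⟨C2, hC2⟩ := S7.lemA (show (0:ℝ) ≤ c/2 by positivity) hx
  obtain ⟨C3, hC3⟩ := S7.lemA (show (0:ℝ) ≤ c+1 by positivity) hx
  refine ⟨C1 + 2/c * C2 + C3, fun u hu => ?_⟩
  have hu' : (0:ℝ) < u := hu
  have hl := S7.log_bound hc u hu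
  have e1 : u ^ c * u ^ (-(c/2)) = u ^ (c/2) := by
    rw [← Real.rpow_add hu']; congr 1; ring
  have e2 : u ^ c * u = u ^ (c+1) :=
    (Real.rpow_add_one (ne_of_gt hu') c).symm
  have expand : u ^ c * (1 + |Real.log u|) * Real.exp (-(x*u))
      ≤ u ^ c * (1 + (2 / c * u ^ (-(c/2)) + u)) * Real.exp (-(x*u)) := by
    apply mul_le_mul_of_nonneg_right _ (Real.exp_pos _).le
    apply mul_le_mul_of_nonneg_left _ (Real.rpow_nonneg hu'.le c)
    linarith
  have expand2 : u ^ c * (1 + (2 / c * u ^ (-(c/2)) + u)) * Real.exp (-(x*u))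
      = u ^ c * Real.exp (-(x*u)) + 2/c * (u ^ (c/2) * Real.exp (-(x*u)))
        + u ^ (c+1) * Real.exp (-(x*u)) := by
    rw [← e1, ← e2]; ring
  have b1 := hC1 u hu
  have b2 := hC2 u hu
  have b3 := hC3 u hu
  have hc2 : 0 ≤ 2/c := by positivity
  calc u ^ c * (1 + |Real.log u|) * Real.exp (-(x*u))
      ≤ u ^ c * Real.exp (-(x*u)) + 2/c * (u ^ (c/2) * Real.exp (-(x*u)))
        + u ^ (c+1) * Real.exp (-(x*u)) := by rw [← expand2]; exact expand
    _ ≤ C1 + 2/c * C2 + C3 := by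
        have := mul_le_mul_of_nonneg_left b2 hc2
        linarith

namespace S7

lemma one_sub_exp_pos {y : ℝ} (hy : 0 < y) : 0 < 1 - Real.exp (-y) := by
  have hE : Real.exp (-y) < 1 := Real.exp_lt_one_iff.mpr (by linarith)
  linarith

lemma one_sub_exp_lt_one {y : ℝ} (hy : 0 < y) : 1 - Real.exp (-y) < 1 := by
  have := Real.exp_pos (-y); linarith

/-- kernel bound `y/(1-e^{-y}) ≤ 1+y`. -/
lemma kernel_le {y : ℝ} (hy : 0 < y) :
    y / (1 - Real.exp (-y)) ≤ 1 + y := by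
  have h1 : 0 < 1 - Real.exp (-y) := one_sub_exp_pos hy
  rw [div_le_iff₀ h1]
  have hA := Real.add_one_le_exp y
  have hB : Real.exp (-y) * Real.exp y = 1 := by rw [← Real.exp_add]; simp
  have hE0 : 0 < Real.exp (-y) := Real.exp_pos _
  nlinarith

lemma kernel_nonneg {y : ℝ} (hy : 0 < y) : 0 ≤ y / (1 - Real.exp (-y)) :=
  div_nonneg hy.le (one_sub_exp_pos hy).le

/-- `HasSum (x^n/(n+1)) (y/x)` with `x = 1-e^{-y}`. -/
lemma hasSum_ker {y : ℝ} (hy : 0 < y) :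
    HasSum (fun n : ℕ => (1 - Real.exp (-y)) ^ n / (n + 1))
      (y / (1 - Real.exp (-y))) := by
  set x := 1 - Real.exp (-y) with hxdef
  have hx0 : 0 < x := one_sub_exp_pos hy
  have hx1 : x < 1 := one_sub_exp_lt_one hy
  have habs : |x| < 1 := by rw [abs_of_pos hx0]; exact hx1
  have H := Real.hasSum_pow_div_log_of_abs_lt_one habs
  have h1x : 1 - x = Real.exp (-y) := by rw [hxdef]; ring
  have hlog : -Real.log (1 - x) = y := by rw [h1x, Real.log_exp]; ring
  rw [hlog] at H
  have H2 := H.mul_left x⁻¹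
  convert H2 using 1
  · rfl
  · funext n
    rw [pow_succ]
    field_simp
  · rw [inv_mul_eq_div]

/-- The master weight bound. -/
lemma weight_bdd {x a b hstep : ℝ} (hx : 0 < x) (ha : 1 < a) (hb : 1 < b)
    (hstep0 : 0 ≤ hstep) :
    ∃ C, ∀ u ∈ Ioi (0:ℝ),
      (1 + hstep * u) * (u ^ (a-1) + u ^ (b-1)) * (1 + |Real.log u|)
        * Real.exp (-(x * u)) ≤ C := by
  obtain ⟨C1, h1⟩ := S7.lemB (show (0:ℝ) < a - 1 by linarith) hx
  obtain ⟨C2, h2⟩ := S7.lemB (show (0:ℝ) < b - 1 by linarith) hx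
  obtain ⟨C3, h3⟩ := S7.lemB (show (0:ℝ) < a by linarith) hx
  obtain ⟨C4, h4⟩ := S7.lemB (show (0:ℝ) < b by linarith) hx
  refine ⟨C1 + C2 + hstep * C3 + hstep * C4, fun u hu => ?_⟩
  have hu' : (0:ℝ) < u := hu
  have ea : u * u ^ (a-1) = u ^ a := by
    rw [mul_comm, ← Real.rpow_add_one (ne_of_gt hu') (a-1), sub_add_cancel]
  have eb : u * u ^ (b-1) = u ^ b := by
    rw [mul_comm, ← Real.rpow_add_one (ne_of_gt hu') (b-1), sub_add_cancel]
  have expand : (1 + hstep * u) * (u ^ (a-1) + u ^ (b-1)) * (1 + |Real.log u|)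
        * Real.exp (-(x * u))
      = u ^ (a-1) * (1 + |Real.log u|) * Real.exp (-(x * u))
        + u ^ (b-1) * (1 + |Real.log u|) * Real.exp (-(x * u))
        + hstep * ((u * u ^ (a-1)) * (1 + |Real.log u|) * Real.exp (-(x * u)))
        + hstep * ((u * u ^ (b-1)) * (1 + |Real.log u|) * Real.exp (-(x * u))) := by
    ring
  rw [expand, ea, eb]
  have b1 := h1 u hu
  have b2 := h2 u hu
  have b3 := mul_le_mul_of_nonneg_left (h3 u hu) hstep0
  have b4 := mul_le_mul_of_nonneg_left (h4 u hu) hstep0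
  linarith

end S7

noncomputable section S7sec
namespace S7

open Complex

/-- The positive real kernel `e^{-tu} (1-e^{-hu})^n / (n+1)`. -/
def ker (h : ℝ) (n : ℕ) (t u : ℝ) : ℝ :=
  Real.exp (-(t * u)) * ((1 - Real.exp (-(h * u))) ^ n / ((n : ℝ) + 1))

/-- The `n`-th summand under the integral sign. -/
def gfun (φ : ℝ → ℂ) (h : ℝ) (s : ℂ) (n : ℕ) (t u : ℝ) : ℂ :=
  (ker h n t u : ℂ) * (φ u * (u : ℂ) ^ (s - 1))

/-- The signed integrand appearing in the iterated difference. -/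
def fint (φ : ℝ → ℂ) (h : ℝ) (s : ℂ) (n : ℕ) (t u : ℝ) : ℂ :=
  ((Real.exp (-(t * u)) * (Real.exp (-(h * u)) - 1) ^ n : ℝ) : ℂ) *
    (φ u * (u : ℂ) ^ (s - 1))

variable {φ : ℝ → ℂ} {h : ℝ} {s : ℂ} {t : ℝ}

lemma ker_nonneg (hh : 0 < h) {n : ℕ} {u : ℝ} (hu : 0 < u) (t : ℝ) :
    0 ≤ ker h n t u := by
  have h1 : 0 ≤ 1 - Real.exp (-(h * u)) := (one_sub_exp_pos (by positivity)).le
  exact mul_nonneg (Real.exp_pos _).le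
    (div_nonneg (pow_nonneg h1 n) (by positivity))

lemma ker_le (hh : 0 < h) {n : ℕ} {u : ℝ} (hu : 0 < u) (t : ℝ) :
    ker h n t u ≤ Real.exp (-(t * u)) := by
  have hy : (0:ℝ) < h * u := by positivity
  have h1 : 0 ≤ 1 - Real.exp (-(h * u)) := (one_sub_exp_pos hy).le
  have h2 : 1 - Real.exp (-(h * u)) ≤ 1 := (one_sub_exp_lt_one hy).le
  have h3 : (1 - Real.exp (-(h * u))) ^ n ≤ 1 := pow_le_one₀ h1 h2
  have h4 : (1 - Real.exp (-(h * u))) ^ n / ((n:ℝ) + 1) ≤ 1 := by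
    rw [div_le_one (by positivity)]
    calc (1 - Real.exp (-(h * u))) ^ n ≤ 1 := h3
      _ ≤ (n:ℝ) + 1 := by
          have : (0:ℝ) ≤ (n:ℝ) := Nat.cast_nonneg n; linarith
  calc ker h n t u ≤ Real.exp (-(t*u)) * 1 := by
        apply mul_le_mul_of_nonneg_left h4 (Real.exp_pos _).le
    _ = Real.exp (-(t*u)) := mul_one _

/-- cpow with positive real base, rewritten through the exponential. -/
lemma cpow_eq_exp {u : ℝ} (hu : 0 < u) (w : ℂ) :
    (u : ℂ) ^ w = Complex.exp ((Real.log u : ℂ) * w) := by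
  rw [Complex.cpow_def_of_ne_zero (by exact_mod_cast ne_of_gt hu),
    Complex.ofReal_log hu.le]

lemma aesm_cpow (w : ℂ) :
    AEStronglyMeasurable (fun u : ℝ => (u : ℂ) ^ w) (volume.restrict (Ioi 0)) := by
  have m : Measurable fun u : ℝ => Complex.exp ((Real.log u : ℂ) * w) :=
    Complex.measurable_exp.comp
      ((Complex.measurable_ofReal.comp Real.measurable_log).mul_const w)
  refine m.aestronglyMeasurable.congr ?_
  filter_upwards [ae_restrict_mem measurableSet_Ioi] with u hu
  exact (cpow_eq_exp hu w).symm

lemma norm_cpow {u : ℝ} (hu : 0 < u) (w : ℂ) : ‖(u : ℂ) ^ w‖ = u ^ w.re := by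
  rw [Complex.norm_cpow_eq_rpow_re_of_pos hu]

lemma aesm_gfun (hφ : Measurable φ) (n : ℕ) (t : ℝ) :
    AEStronglyMeasurable (gfun φ h s n t) (volume.restrict (Ioi 0)) := by
  have c1 : Continuous fun u : ℝ => ((ker h n t u : ℝ) : ℂ) := by
    apply Complex.continuous_ofReal.comp
    unfold ker
    fun_prop
  exact (c1.aestronglyMeasurable.mul
    (hφ.aestronglyMeasurable.mul (aesm_cpow (s - 1))))

lemma aesm_fint (hφ : Measurable φ) (n : ℕ) (t : ℝ) :
    AEStronglyMeasurable (fint φ h s n t) (volume.restrict (Ioi 0)) := by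
  have c1 : Continuous fun u : ℝ =>
      ((Real.exp (-(t * u)) * (Real.exp (-(h * u)) - 1) ^ n : ℝ) : ℂ) := by
    apply Complex.continuous_ofReal.comp
    fun_prop
  exact (c1.aestronglyMeasurable.mul
    (hφ.aestronglyMeasurable.mul (aesm_cpow (s - 1))))

/-- Domination principle for integrability against `MemDL`. -/
lemma int_dom (hφ : MemDL φ) {E : Type*} [NormedAddCommGroup E] {g : ℝ → E}
    (hm : AEStronglyMeasurable g (volume.restrict (Ioi 0)))
    {C x : ℝ} (hx : 0 < x)
    (hbd : ∀ u ∈ Ioi (0:ℝ), ‖g u‖ ≤ C * (Real.exp (-(x * u)) * ‖φ u‖)) :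
    IntegrableOn g (Ioi 0) := by
  have base := (hφ.2.2 x hx).const_mul C
  apply Integrable.mono' base hm
  filter_upwards [ae_restrict_mem measurableSet_Ioi] with u hu
  exact hbd u hu

lemma norm_gfun (hh : 0 < h) {n : ℕ} {u : ℝ} (hu : 0 < u) (t : ℝ) :
    ‖gfun φ h s n t u‖ = ker h n t u * (‖φ u‖ * u ^ (s.re - 1)) := by
  unfold gfun
  rw [norm_mul, norm_mul, norm_cpow hu, Complex.norm_real, Real.norm_eq_abs,
    _root_.abs_of_nonneg (ker_nonneg hh hu t),
    show (s - 1).re = s.re - 1 by simp [Complex.sub_re]]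

lemma norm_fint (hh : 0 < h) {n : ℕ} {u : ℝ} (hu : 0 < u) (t : ℝ) :
    ‖fint φ h s n t u‖ ≤ Real.exp (-(t * u)) * (‖φ u‖ * u ^ (s.re - 1)) := by
  unfold fint
  rw [norm_mul, norm_mul, norm_cpow hu]
  have hre : (s - 1).re = s.re - 1 := by simp [Complex.sub_re]
  rw [hre, Complex.norm_real, Real.norm_eq_abs]
  have hy : (0:ℝ) < h * u := by positivity
  have h1 : |Real.exp (-(t * u)) * (Real.exp (-(h * u)) - 1) ^ n|
      ≤ Real.exp (-(t * u)) := by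
    rw [abs_mul, _root_.abs_of_nonneg (Real.exp_pos _).le, _root_.abs_pow]
    have h2 : |Real.exp (-(h * u)) - 1| ≤ 1 := by
      rw [abs_le]
      constructor
      · have := (one_sub_exp_lt_one hy).le; linarith [Real.exp_pos (-(h*u))]
      · have := (one_sub_exp_pos hy).le; linarith
    calc Real.exp (-(t*u)) * |Real.exp (-(h*u)) - 1| ^ n
        ≤ Real.exp (-(t*u)) * 1 := by
          apply mul_le_mul_of_nonneg_left (pow_le_one₀ (abs_nonneg _) h2)
            (Real.exp_pos _).le
      _ = Real.exp (-(t*u)) := mul_one _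
  exact mul_le_mul_of_nonneg_right h1 (by positivity)

/-- `(1+au) u^c e^{-xu}` is bounded on `(0,∞)`. -/
lemma bound1 {x c astep : ℝ} (hx : 0 < x) (hc : 0 < c) (ha : 0 ≤ astep) :
    ∃ C, ∀ u ∈ Ioi (0:ℝ), (1 + astep * u) * u ^ c * Real.exp (-(x * u)) ≤ C := by
  obtain ⟨C1, h1⟩ := S7.lemA hc.le hx
  obtain ⟨C2, h2⟩ := S7.lemA (show (0:ℝ) ≤ c + 1 by linarith) hx
  refine ⟨C1 + astep * C2, fun u hu => ?_⟩
  have hu' : (0:ℝ) < u := hu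
  have e2 : u * u ^ c = u ^ (c + 1) := by
    rw [mul_comm]; exact (Real.rpow_add_one (ne_of_gt hu') c).symm
  have expand : (1 + astep * u) * u ^ c * Real.exp (-(x * u))
      = u ^ c * Real.exp (-(x*u)) + astep * ((u * u ^ c) * Real.exp (-(x*u))) := by
    ring
  rw [expand, e2]
  have b1 := h1 u hu
  have b2 := mul_le_mul_of_nonneg_left (h2 u hu) ha
  linarith

section Core
variable (hφ : MemDL φ) (hh : 0 < h) (hs : 1 < s.re)
include hφ hh hs

lemma integrable_gfun (n : ℕ) (ht : 0 < t) :
    IntegrableOn (gfun φ h s n t) (Ioi 0) := by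
  obtain ⟨C, hC⟩ := bound1 (half_pos ht) (show (0:ℝ) < s.re - 1 by linarith)
    (le_refl (0:ℝ))
  apply int_dom hφ (aesm_gfun hφ.1 n t) (half_pos ht)
  intro u hu
  have hu' : (0:ℝ) < u := hu
  have he : Real.exp (-(t * u)) = Real.exp (-(t/2 * u)) * Real.exp (-(t/2 * u)) := by
    rw [← Real.exp_add]; congr 1; ring
  rw [norm_gfun hh hu' t]
  calc ker h n t u * (‖φ u‖ * u ^ (s.re - 1))
      ≤ Real.exp (-(t*u)) * (‖φ u‖ * u ^ (s.re - 1)) := by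
        apply mul_le_mul_of_nonneg_right (ker_le hh hu' t) (by positivity)
    _ = ((1 + 0*u) * u ^ (s.re-1) * Real.exp (-(t/2*u))) * (Real.exp (-(t/2*u)) * ‖φ u‖) := by
        rw [he]; ring
    _ ≤ C * (Real.exp (-(t/2*u)) * ‖φ u‖) := by
        apply mul_le_mul_of_nonneg_right (hC u hu) (by positivity)

lemma integrable_fint (n : ℕ) (ht : 0 < t) :
    IntegrableOn (fint φ h s n t) (Ioi 0) := by
  obtain ⟨C, hC⟩ := bound1 (half_pos ht) (show (0:ℝ) < s.re - 1 by linarith)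
    (le_refl (0:ℝ))
  apply int_dom hφ (aesm_fint hφ.1 n t) (half_pos ht)
  intro u hu
  have hu' : (0:ℝ) < u := hu
  have he : Real.exp (-(t * u)) = Real.exp (-(t/2 * u)) * Real.exp (-(t/2 * u)) := by
    rw [← Real.exp_add]; congr 1; ring
  calc ‖fint φ h s n t u‖ ≤ Real.exp (-(t*u)) * (‖φ u‖ * u ^ (s.re - 1)) :=
        norm_fint hh hu' t
    _ = ((1 + 0*u) * u ^ (s.re-1) * Real.exp (-(t/2*u))) * (Real.exp (-(t/2*u)) * ‖φ u‖) := by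
        rw [he]; ring
    _ ≤ C * (Real.exp (-(t/2*u)) * ‖φ u‖) := by
        apply mul_le_mul_of_nonneg_right (hC u hu) (by positivity)

/-- The iterated forward difference of `LM φ s`. -/
lemma iter_eq : ∀ n : ℕ, ∀ t : ℝ, 0 < t →
    (Dh h)^[n] (LM φ s) t
      = (1 / Complex.Gamma s) * ∫ u in Ioi (0:ℝ), fint φ h s n t u := by
  intro n
  induction n with
  | zero =>
    intro t ht
    simp only [Function.iterate_zero, id_eq]
    unfold LM
    congr 1
    apply setIntegral_congr_fun measurableSet_Ioi
    intro u _
    unfold fint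
    rw [pow_zero, mul_one, Complex.ofReal_exp]
    push_cast
    ring
  | succ n ih =>
    intro t ht
    rw [Function.iterate_succ_apply']
    show (Dh h)^[n] (LM φ s) (t + h) - (Dh h)^[n] (LM φ s) t = _
    rw [ih (t + h) (by linarith), ih t ht, ← mul_sub]
    congr 1
    rw [← integral_sub (integrable_fint hφ hh hs n (by linarith))
      (integrable_fint hφ hh hs n ht)]
    apply setIntegral_congr_fun measurableSet_Ioi
    intro u hu
    show fint φ h s n (t + h) u - fint φ h s n t u = fint φ h s (n + 1) t u
    unfold fint
    rw [← sub_mul, ← Complex.ofReal_sub]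
    congr 2
    have hexp : Real.exp (-((t + h) * u)) = Real.exp (-(t * u)) * Real.exp (-(h * u)) := by
      rw [← Real.exp_add]; congr 1; ring
    rw [hexp, pow_succ]
    ring

lemma BTerm_eq (n : ℕ) (ht : 0 < t) :
    BTerm h (LM φ s) n t
      = (1 / Complex.Gamma s) * ∫ u in Ioi (0:ℝ), gfun φ h s n t u := by
  have hn : ((n : ℂ) + 1) ≠ 0 := Nat.cast_add_one_ne_zero n
  have hfg : ∀ u : ℝ, fint φ h s n t u
      = ((-1 : ℂ) ^ n * ((n : ℂ) + 1)) * gfun φ h s n t u := by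
    intro u
    unfold fint gfun ker
    push_cast
    rw [show (Complex.exp (-((h:ℂ) * u)) - 1) = -(1 - Complex.exp (-((h:ℂ) * u))) by ring,
      neg_pow]
    field_simp
  unfold BTerm
  rw [iter_eq hφ hh hs n t ht]
  have : (∫ u in Ioi (0:ℝ), fint φ h s n t u)
      = ((-1 : ℂ) ^ n * ((n : ℂ) + 1)) * ∫ u in Ioi (0:ℝ), gfun φ h s n t u := by
    rw [← integral_const_mul]
    exact setIntegral_congr_fun measurableSet_Ioi fun u _ => hfg u
  rw [this]
  have hsq : ((-1 : ℂ) ^ n) * (-1 : ℂ) ^ n = 1 := by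
    rw [← pow_add, ← two_mul, pow_mul]
    norm_num
  calc ((-1 : ℂ) ^ n / ((n:ℂ) + 1)) * ((1 / Complex.Gamma s) *
          (((-1 : ℂ) ^ n * ((n : ℂ) + 1)) * ∫ u in Ioi (0:ℝ), gfun φ h s n t u))
      = (((-1 : ℂ) ^ n * (-1 : ℂ) ^ n) * (((n:ℂ) + 1) / ((n:ℂ) + 1))) *
          ((1 / Complex.Gamma s) * ∫ u in Ioi (0:ℝ), gfun φ h s n t u) := by ring
    _ = (1 / Complex.Gamma s) * ∫ u in Ioi (0:ℝ), gfun φ h s n t u := by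
        rw [hsq, div_self hn]; ring

end Core
section Sum
variable (hφ : MemDL φ) (hh : 0 < h) (hs : 1 < s.re)
include hφ hh hs

lemma summable_int_norm (ht : 0 < t) :
    Summable fun n : ℕ => ∫ u in Ioi (0:ℝ), ‖gfun φ h s n t u‖ := by
  obtain ⟨C, hC⟩ := bound1 (half_pos ht) (show (0:ℝ) < s.re - 1 by linarith) hh.le
  apply summable_of_sum_range_le
    (c := ∫ u in Ioi (0:ℝ), C * (Real.exp (-(t/2 * u)) * ‖φ u‖))
  · intro n
    exact integral_nonneg fun u => norm_nonneg _
  · intro N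
    rw [← integral_finset_sum _ (fun i _ => (integrable_gfun hφ hh hs i ht).norm)]
    apply setIntegral_mono_on
    · exact integrable_finset_sum _ fun i _ => (integrable_gfun hφ hh hs i ht).norm
    · exact (hφ.2.2 (t/2) (half_pos ht)).const_mul C
    · exact measurableSet_Ioi
    · intro u hu
      have hu' : (0:ℝ) < u := hu
      have hy : (0:ℝ) < h * u := by positivity
      have HS : HasSum (fun n : ℕ => ker h n t u * (‖φ u‖ * u ^ (s.re - 1)))
          (Real.exp (-(t*u)) * (h * u / (1 - Real.exp (-(h * u)))) *
            (‖φ u‖ * u ^ (s.re - 1))) :=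
        ((hasSum_ker hy).mul_left (Real.exp (-(t*u)))).mul_right
          (‖φ u‖ * u ^ (s.re - 1))
      have hsum_eq : ∀ n ∈ Finset.range N, ‖gfun φ h s n t u‖
          = ker h n t u * (‖φ u‖ * u ^ (s.re - 1)) := fun n _ => norm_gfun hh hu' t
      rw [Finset.sum_congr rfl hsum_eq]
      have step1 : ∑ n ∈ Finset.range N, ker h n t u * (‖φ u‖ * u ^ (s.re - 1))
          ≤ Real.exp (-(t*u)) * (h * u / (1 - Real.exp (-(h * u)))) *
            (‖φ u‖ * u ^ (s.re - 1)) :=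
        sum_le_hasSum _ (fun n _ => mul_nonneg (ker_nonneg hh hu' t) (by positivity)) HS
      refine step1.trans ?_
      have he : Real.exp (-(t * u)) = Real.exp (-(t/2 * u)) * Real.exp (-(t/2 * u)) := by
        rw [← Real.exp_add]; congr 1; ring
      have hK : h * u / (1 - Real.exp (-(h * u))) ≤ 1 + h * u := kernel_le hy
      calc Real.exp (-(t*u)) * (h * u / (1 - Real.exp (-(h * u)))) *
            (‖φ u‖ * u ^ (s.re - 1))
          ≤ Real.exp (-(t*u)) * (1 + h * u) * (‖φ u‖ * u ^ (s.re - 1)) := by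
            apply mul_le_mul_of_nonneg_right _ (by positivity)
            exact mul_le_mul_of_nonneg_left hK (Real.exp_pos _).le
        _ = ((1 + h * u) * u ^ (s.re - 1) * Real.exp (-(t/2*u))) *
              (Real.exp (-(t/2*u)) * ‖φ u‖) := by rw [he]; ring
        _ ≤ C * (Real.exp (-(t/2*u)) * ‖φ u‖) :=
            mul_le_mul_of_nonneg_right (hC u hu) (by positivity)

lemma summable_norm_BTerm (ht : 0 < t) :
    Summable fun n : ℕ => ‖BTerm h (LM φ s) n t‖ := by
  refine Summable.of_nonneg_of_le (fun n => norm_nonneg _) (fun n => ?_)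
    ((summable_int_norm hφ hh hs ht).mul_left ‖(1:ℂ) / Complex.Gamma s‖)
  rw [BTerm_eq hφ hh hs n ht, norm_mul]
  exact mul_le_mul_of_nonneg_left (norm_integral_le_integral_norm _) (norm_nonneg _)

lemma main2 (ht : 0 < t) :
    Bop h (LM φ s) t = (1 / Complex.Gamma s) *
      ∫ u in Ioi (0:ℝ), Complex.exp (-(t * u : ℝ)) *
        (((h * u : ℝ) : ℂ) / (1 - Complex.exp (-(h * u : ℝ)))) * φ u
          * (u:ℂ) ^ (s - 1) := by
  unfold Bop
  have h1 : ∀ n : ℕ, BTerm h (LM φ s) n t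
      = (1 / Complex.Gamma s) * ∫ u in Ioi (0:ℝ), gfun φ h s n t u :=
    fun n => BTerm_eq hφ hh hs n ht
  rw [tsum_congr h1, tsum_mul_left]
  congr 1
  rw [MeasureTheory.integral_tsum_of_summable_integral_norm
    (fun n => integrable_gfun hφ hh hs n ht) (summable_int_norm hφ hh hs ht)]
  apply setIntegral_congr_fun measurableSet_Ioi
  intro u hu
  have hu' : (0:ℝ) < u := hu
  have hy : (0:ℝ) < h * u := by positivity
  have HS : HasSum (fun n : ℕ => gfun φ h s n t u)
      (((Real.exp (-(t*u)) * (h * u / (1 - Real.exp (-(h * u)))) : ℝ) : ℂ) *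
        (φ u * (u:ℂ) ^ (s-1))) := by
    have hr := (hasSum_ker hy).mul_left (Real.exp (-(t*u)))
    have hc := hr.mapL Complex.ofRealCLM
    have hm := hc.mul_right (φ u * (u:ℂ) ^ (s-1))
    simpa [gfun, ker, Complex.ofRealCLM_apply] using hm
  show (∑' n : ℕ, gfun φ h s n t u) = Complex.exp (-(t * u : ℝ)) *
    (((h * u : ℝ) : ℂ) / (1 - Complex.exp (-(h * u : ℝ)))) * φ u * (u:ℂ) ^ (s - 1)
  rw [HS.tsum_eq]
  push_cast [Complex.ofReal_exp]
  ring

lemma int_norm_mono {a : ℝ} (ha : 0 < a) (n : ℕ) {x : ℝ} (hx : x ∈ Ici a) :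
    ∫ u in Ioi (0:ℝ), ‖gfun φ h s n x u‖
      ≤ ∫ u in Ioi (0:ℝ), ‖gfun φ h s n a u‖ := by
  have hx0 : (0:ℝ) < x := lt_of_lt_of_le ha hx
  apply setIntegral_mono_on ((integrable_gfun hφ hh hs n hx0).norm)
    ((integrable_gfun hφ hh hs n ha).norm) measurableSet_Ioi
  intro u hu
  have hu' : (0:ℝ) < u := hu
  rw [norm_gfun hh hu' x, norm_gfun hh hu' a]
  apply mul_le_mul_of_nonneg_right _ (by positivity)
  unfold ker
  have h1 : (0:ℝ) ≤ (1 - Real.exp (-(h*u)))^n / ((n:ℝ)+1) :=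
    div_nonneg (pow_nonneg (one_sub_exp_pos (by positivity)).le n) (by positivity)
  exact mul_le_mul_of_nonneg_right
    (Real.exp_le_exp.mpr (by nlinarith [mem_Ici.1 hx])) h1

lemma aluon : ALUOn (BTerm h (LM φ s)) (Ioi 0) := by
  constructor
  · exact fun t ht => summable_norm_BTerm hφ hh hs ht
  · rw [tendstoLocallyUniformlyOn_iff_forall_isCompact isOpen_Ioi]
    intro K hKsub hK
    rcases K.eq_empty_or_nonempty with rfl | hne
    · exact tendstoUniformlyOn_empty
    · have haK : sInf K ∈ K := hK.sInf_mem hne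
      have ha : 0 < sInf K := hKsub haK
      have hKsub' : K ⊆ Ici (sInf K) := fun x hx => csInf_le hK.bddBelow hx
      apply TendstoUniformlyOn.mono _ hKsub'
      apply tendstoUniformlyOn_tsum_nat
        (hu := (summable_int_norm hφ hh hs ha).mul_left ‖(1:ℂ) / Complex.Gamma s‖)
      intro n x hx
      rw [BTerm_eq hφ hh hs n (lt_of_lt_of_le ha hx), norm_mul]
      exact mul_le_mul_of_nonneg_left
        ((norm_integral_le_integral_norm _).trans
          (int_norm_mono hφ hh hs ha n hx)) (norm_nonneg _)

end Sum

/-- The parametric integrand in `z`. -/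
def Fz (φ : ℝ → ℂ) (h t : ℝ) (z : ℂ) (u : ℝ) : ℂ :=
  Complex.exp (-(t * u : ℝ)) * (((h * u : ℝ) : ℂ) / (1 - Complex.exp (-(h * u : ℝ))))
    * φ u * (u:ℂ) ^ (z - 1)

/-- Its `z`-derivative. -/
def Fz' (φ : ℝ → ℂ) (h t : ℝ) (z : ℂ) (u : ℝ) : ℂ :=
  Complex.exp (-(t * u : ℝ)) * (((h * u : ℝ) : ℂ) / (1 - Complex.exp (-(h * u : ℝ))))
    * φ u * ((u:ℂ) ^ (z - 1) * ((Real.log u : ℝ) : ℂ))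

lemma rpow_le_sum {u c a b : ℝ} (hu : 0 < u) (hac : a ≤ c) (hcb : c ≤ b) :
    u ^ c ≤ u ^ a + u ^ b := by
  rcases le_or_gt 1 u with h1 | h1
  · have h2 := Real.rpow_le_rpow_of_exponent_le h1 hcb
    have h3 := Real.rpow_nonneg hu.le a
    linarith
  · have h2 := Real.rpow_le_rpow_of_exponent_ge hu h1.le hac
    have h3 := Real.rpow_nonneg hu.le b
    linarith


lemma kerC_eq {u : ℝ} (hu : 0 < u) :
    (((h * u : ℝ) : ℂ) / (1 - Complex.exp (-(h * u : ℝ))))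
      = ((h * u / (1 - Real.exp (-(h * u))) : ℝ) : ℂ) := by
  push_cast [Complex.ofReal_exp]
  ring

lemma norm_exp_t (t u : ℝ) : ‖Complex.exp (-(t * u : ℝ))‖ = Real.exp (-(t * u)) := by
  rw [Complex.norm_exp]
  simp

section Holo
variable (hh : 0 < h)
include hh

lemma norm_Fz {z : ℂ} {u : ℝ} (hu : 0 < u) (t : ℝ) :
    ‖Fz φ h t z u‖ = Real.exp (-(t * u)) * (h * u / (1 - Real.exp (-(h * u))))
      * ‖φ u‖ * u ^ (z.re - 1) := by
  have hy : (0:ℝ) < h * u := by positivity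
  unfold Fz
  rw [kerC_eq hu, norm_mul, norm_mul, norm_mul, norm_exp_t, norm_cpow hu]
  rw [show (z - 1).re = z.re - 1 by simp [Complex.sub_re]]
  rw [show ‖((h * u / (1 - Real.exp (-(h * u))) : ℝ) : ℂ)‖
      = h * u / (1 - Real.exp (-(h * u))) by
    rw [Complex.norm_real, Real.norm_eq_abs]
    exact _root_.abs_of_nonneg (kernel_nonneg hy)]

lemma norm_Fz' {z : ℂ} {u : ℝ} (hu : 0 < u) (t : ℝ) :
    ‖Fz' φ h t z u‖ = Real.exp (-(t * u)) * (h * u / (1 - Real.exp (-(h * u))))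
      * ‖φ u‖ * (u ^ (z.re - 1) * |Real.log u|) := by
  have hy : (0:ℝ) < h * u := by positivity
  unfold Fz'
  rw [kerC_eq hu, norm_mul, norm_mul, norm_mul, norm_mul, norm_exp_t, norm_cpow hu]
  rw [show (z - 1).re = z.re - 1 by simp [Complex.sub_re]]
  rw [show ‖((h * u / (1 - Real.exp (-(h * u))) : ℝ) : ℂ)‖
      = h * u / (1 - Real.exp (-(h * u))) by
    rw [Complex.norm_real, Real.norm_eq_abs]
    exact _root_.abs_of_nonneg (kernel_nonneg hy)]
  rw [show ‖((Real.log u : ℝ) : ℂ)‖ = |Real.log u| by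
    rw [Complex.norm_real, Real.norm_eq_abs]]

lemma aesm_kerC :
    AEStronglyMeasurable (fun u : ℝ =>
      (((h * u : ℝ) : ℂ) / (1 - Complex.exp (-(h * u : ℝ)))))
      (volume.restrict (Ioi 0)) := by
  have m : Measurable fun u : ℝ => ((h * u / (1 - Real.exp (-(h * u))) : ℝ) : ℂ) := by
    apply Complex.measurable_ofReal.comp
    fun_prop
  refine m.aestronglyMeasurable.congr ?_
  filter_upwards [ae_restrict_mem measurableSet_Ioi] with u hu
  exact (kerC_eq hu).symm

lemma aesm_Fz (hφm : Measurable φ) (t : ℝ) (z : ℂ) :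
    AEStronglyMeasurable (Fz φ h t z) (volume.restrict (Ioi 0)) := by
  have c1 : Continuous fun u : ℝ => Complex.exp (-(t * u : ℝ)) := by fun_prop
  exact ((c1.aestronglyMeasurable.mul (aesm_kerC hh)).mul
    hφm.aestronglyMeasurable).mul (aesm_cpow (z - 1))

lemma aesm_Fz' (hφm : Measurable φ) (t : ℝ) (z : ℂ) :
    AEStronglyMeasurable (Fz' φ h t z) (volume.restrict (Ioi 0)) := by
  have c1 : Continuous fun u : ℝ => Complex.exp (-(t * u : ℝ)) := by fun_prop
  have c2 : Measurable fun u : ℝ => ((Real.log u : ℝ) : ℂ) :=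
    Complex.measurable_ofReal.comp Real.measurable_log
  exact ((c1.aestronglyMeasurable.mul (aesm_kerC hh)).mul
    hφm.aestronglyMeasurable).mul
      ((aesm_cpow (z - 1)).mul c2.aestronglyMeasurable)

variable (hφ : MemDL φ) (ht : 0 < t)
include hφ ht

lemma integrable_Fz {z : ℂ} (hz : 1 < z.re) :
    IntegrableOn (Fz φ h t z) (Ioi 0) := by
  obtain ⟨C, hC⟩ := bound1 (half_pos ht) (show (0:ℝ) < z.re - 1 by linarith) hh.le
  apply int_dom hφ (aesm_Fz hh hφ.1 t z) (half_pos ht)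
  intro u hu
  have hu' : (0:ℝ) < u := hu
  have hy : (0:ℝ) < h * u := by positivity
  have he : Real.exp (-(t * u)) = Real.exp (-(t/2 * u)) * Real.exp (-(t/2 * u)) := by
    rw [← Real.exp_add]; congr 1; ring
  rw [norm_Fz hh hu' t]
  calc Real.exp (-(t * u)) * (h * u / (1 - Real.exp (-(h * u)))) * ‖φ u‖ * u ^ (z.re - 1)
      ≤ Real.exp (-(t * u)) * (1 + h * u) * ‖φ u‖ * u ^ (z.re - 1) := by
        apply mul_le_mul_of_nonneg_right _ (by positivity)
        apply mul_le_mul_of_nonneg_right _ (norm_nonneg _)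
        exact mul_le_mul_of_nonneg_left (kernel_le hy) (Real.exp_pos _).le
    _ = ((1 + h * u) * u ^ (z.re - 1) * Real.exp (-(t/2 * u)))
          * (Real.exp (-(t/2 * u)) * ‖φ u‖) := by rw [he]; ring
    _ ≤ C * (Real.exp (-(t/2 * u)) * ‖φ u‖) :=
        mul_le_mul_of_nonneg_right (hC u hu) (by positivity)

lemma diffAt_integral {z₀ : ℂ} (hz₀ : 1 < z₀.re) :
    DifferentiableAt ℂ (fun z => ∫ u in Ioi (0:ℝ), Fz φ h t z u) z₀ := by
  have hε : (0:ℝ) < (z₀.re - 1)/2 := by linarith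
  have ha : 1 < z₀.re - (z₀.re - 1)/2 := by linarith
  have hb : 1 < z₀.re + (z₀.re - 1)/2 := by linarith
  obtain ⟨Cd, hCd⟩ := weight_bdd (x := t/2) (a := z₀.re - (z₀.re - 1)/2)
    (b := z₀.re + (z₀.re - 1)/2) (hstep := h) (half_pos ht) ha hb hh.le
  refine (hasDerivAt_integral_of_dominated_loc_of_deriv_le
    (F := fun z u => Fz φ h t z u) (F' := fun z u => Fz' φ h t z u)
    (bound := fun u => Cd * (Real.exp (-(t/2 * u)) * ‖φ u‖))
    (Metric.ball_mem_nhds z₀ hε) ?_ ?_ ?_ ?_ ?_ ?_).2.differentiableAt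
  · exact Filter.Eventually.of_forall fun z => aesm_Fz hh hφ.1 t z
  · exact integrable_Fz hh hφ ht hz₀
  · exact aesm_Fz' hh hφ.1 t z₀
  · -- bound on the derivative
    filter_upwards [ae_restrict_mem measurableSet_Ioi] with u hu
    intro z hz
    have hu' : (0:ℝ) < u := hu
    have hy : (0:ℝ) < h * u := by positivity
    have hre : |z.re - z₀.re| < (z₀.re - 1)/2 := by
      have h1 : dist z z₀ < (z₀.re - 1)/2 := Metric.mem_ball.mp hz
      have h2 : |(z - z₀).re| ≤ ‖z - z₀‖ := Complex.abs_re_le_norm _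
      rw [Complex.dist_eq] at h1
      simpa [Complex.sub_re] using lt_of_le_of_lt h2 h1
    have hac : z₀.re - (z₀.re - 1)/2 - 1 ≤ z.re - 1 := by
      have := abs_lt.mp hre; linarith [this.1]
    have hcb : z.re - 1 ≤ z₀.re + (z₀.re - 1)/2 - 1 := by
      have := abs_lt.mp hre; linarith [this.2]
    have hP : u ^ (z.re - 1) ≤ u ^ (z₀.re - (z₀.re - 1)/2 - 1)
        + u ^ (z₀.re + (z₀.re - 1)/2 - 1) := rpow_le_sum hu' hac hcb
    have he : Real.exp (-(t * u)) = Real.exp (-(t/2 * u)) * Real.exp (-(t/2 * u)) := by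
      rw [← Real.exp_add]; congr 1; ring
    rw [norm_Fz' hh hu' t]
    have step1 : h * u / (1 - Real.exp (-(h * u))) * u ^ (z.re - 1) * |Real.log u|
          * Real.exp (-(t/2 * u))
        ≤ (1 + h * u) * (u ^ (z₀.re - (z₀.re - 1)/2 - 1)
            + u ^ (z₀.re + (z₀.re - 1)/2 - 1)) * (1 + |Real.log u|)
          * Real.exp (-(t/2 * u)) := by
      apply mul_le_mul_of_nonneg_right _ (Real.exp_pos _).le
      apply mul_le_mul
      · apply mul_le_mul (kernel_le hy) hP (Real.rpow_nonneg hu'.le _) (by nlinarith)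
      · linarith [abs_nonneg (Real.log u)]
      · exact abs_nonneg _
      · have := Real.rpow_nonneg hu'.le (z₀.re - (z₀.re - 1)/2 - 1)
        have := Real.rpow_nonneg hu'.le (z₀.re + (z₀.re - 1)/2 - 1)
        nlinarith
    calc Real.exp (-(t * u)) * (h * u / (1 - Real.exp (-(h * u)))) * ‖φ u‖
          * (u ^ (z.re - 1) * |Real.log u|)
        = (h * u / (1 - Real.exp (-(h * u))) * u ^ (z.re - 1) * |Real.log u|
            * Real.exp (-(t/2 * u))) * (Real.exp (-(t/2 * u)) * ‖φ u‖) := by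
          rw [he]; ring
      _ ≤ ((1 + h * u) * (u ^ (z₀.re - (z₀.re - 1)/2 - 1)
            + u ^ (z₀.re + (z₀.re - 1)/2 - 1)) * (1 + |Real.log u|)
          * Real.exp (-(t/2 * u))) * (Real.exp (-(t/2 * u)) * ‖φ u‖) :=
          mul_le_mul_of_nonneg_right step1 (by positivity)
      _ ≤ Cd * (Real.exp (-(t/2 * u)) * ‖φ u‖) :=
          mul_le_mul_of_nonneg_right (hCd u hu) (by positivity)
  · exact (hφ.2.2 (t/2) (half_pos ht)).const_mul Cd
  · -- differentiability in z
    filter_upwards [ae_restrict_mem measurableSet_Ioi] with u hu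
    intro z _
    have hu' : (0:ℝ) < u := hu
    have key : ∀ w : ℂ, (u:ℂ) ^ (w - 1)
        = Complex.exp (((Real.log u : ℝ) : ℂ) * (w - 1)) :=
      fun w => cpow_eq_exp hu' (w - 1)
    simp only [Fz, Fz', key]
    have d1 : HasDerivAt (fun w : ℂ => ((Real.log u : ℝ) : ℂ) * (w - 1))
        ((Real.log u : ℝ) : ℂ) z := by
      simpa using ((hasDerivAt_id z).sub_const (1:ℂ)).const_mul ((Real.log u : ℝ) : ℂ)
    exact d1.cexp.const_mul
      (Complex.exp (-(t * u : ℝ)) *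
        (((h * u : ℝ) : ℂ) / (1 - Complex.exp (-(h * u : ℝ)))) * φ u)

lemma main3 : DifferentiableOn ℂ (fun z => Bop h (LM φ z) t) {z : ℂ | 1 < z.re} := by
  have hG : DifferentiableOn ℂ (fun z => (1 / Complex.Gamma z) *
      ∫ u in Ioi (0:ℝ), Fz φ h t z u) {z : ℂ | 1 < z.re} := by
    intro z hz
    have h1 : DifferentiableAt ℂ (fun z : ℂ => 1 / Complex.Gamma z) z := by
      simp only [one_div]
      exact Complex.differentiable_one_div_Gamma z
    exact (h1.mul (diffAt_integral hh hφ ht hz)).differentiableWithinAt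
  apply DifferentiableOn.congr hG
  intro z hz
  exact main2 hφ hh hz ht

end Holo

end S7
end S7sec
/-- for `φ ∈ 𝒟(ℒ)`, `h > 0` and `Re s > 1`, the Bernoulli series of
`f_{−s} = LM φ s` with step `h` converges absolutely and locally uniformly on `(0,∞)`,
`(B_h f_{−s})(t) = (1/Γ(s)) ∫₀^∞ e^{−tu} (hu/(1−e^{−hu})) φ(u) u^{s−1} du` for every `t > 0`,
and for each fixed `t > 0`, `s ↦ (B_h f_{−s})(t)` is holomorphic on `{Re s > 1}`. -/
theorem stmt7 (φ : ℝ → ℂ) (hφ : MemDL φ) (h : ℝ) (hh : 0 < h) (s : ℂ) (hs : 1 < s.re) :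
    ALUOn (BTerm h (LM φ s)) (Ioi 0) ∧
    (∀ t ∈ Ioi (0:ℝ),
      Bop h (LM φ s) t =
        (1 / Complex.Gamma s) *
          ∫ u in Ioi (0:ℝ),
            Complex.exp (-(t * u : ℝ)) *
              (((h * u : ℝ) : ℂ) / (1 - Complex.exp (-(h * u : ℝ)))) * φ u *
                (u : ℂ) ^ (s - 1)) ∧
    ∀ t ∈ Ioi (0:ℝ),
      DifferentiableOn ℂ (fun z => Bop h (LM φ z) t) {z : ℂ | 1 < z.re} := by
  exact ⟨S7.aluon hφ hh hs, fun t ht => S7.main2 hφ hh hs ht,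
    fun t ht => S7.main3 hh hφ ht⟩
end

section
/- Let f ∈ ℋ. Then ∂_t f(s,t) = s·f(s−1, t) for all s ∈ ℂ and t > 0. Consequently, for every integer n ≥ 0 the function t ↦ f(n,t) coincides on (0,∞) with a polynomial of degree at most n. -/
open MeasureTheory Filter Set

lemma rpow_le_const_mul_exp {c σ : ℝ} (hc : 0 < c) (hσ : 0 ≤ σ) :
    ∃ C : ℝ, 0 ≤ C ∧ ∀ u : ℝ, 0 < u → u ^ σ ≤ C * Real.exp (c * u) := by
  set n := ⌈σ⌉₊ with hn
  refine ⟨(n.factorial : ℝ) / c ^ n + 1, by positivity, fun u hu => ?_⟩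
  have hexp1 : 1 ≤ Real.exp (c * u) := by
    rw [← Real.exp_zero]; exact Real.exp_le_exp.mpr (by positivity)
  rcases le_or_gt u 1 with h1 | h1
  · calc u ^ σ ≤ 1 := Real.rpow_le_one hu.le h1 hσ
    _ ≤ ((n.factorial : ℝ) / c ^ n + 1) * 1 := by
        nlinarith [div_nonneg (Nat.cast_nonneg n.factorial) (pow_nonneg hc.le n)]
    _ ≤ ((n.factorial : ℝ) / c ^ n + 1) * Real.exp (c * u) := by
        apply mul_le_mul_of_nonneg_left hexp1; positivity
  · have h2 : u ^ σ ≤ u ^ (n : ℝ) :=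
      Real.rpow_le_rpow_of_exponent_le h1.le (Nat.le_ceil σ)
    have h3 : u ^ (n:ℝ) = u ^ n := by rw [Real.rpow_natCast]
    have h4 : (c * u) ^ n / n.factorial ≤ Real.exp (c * u) :=
      Real.pow_div_factorial_le_exp _ (by positivity) n
    have h5 : u ^ n ≤ (n.factorial : ℝ) / c ^ n * Real.exp (c * u) := by
      have hcn : (0:ℝ) < c ^ n := by positivity
      have hfn : (0:ℝ) < n.factorial := by positivity
      rw [div_mul_eq_mul_div, le_div_iff₀ hcn] at *
      calc u ^ n * c ^ n = (c * u) ^ n := by rw [mul_pow]; ring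
      _ ≤ (n.factorial : ℝ) * Real.exp (c * u) := by
          rw [div_le_iff₀ hfn] at h4; linarith
    calc u ^ σ ≤ (n.factorial : ℝ) / c ^ n * Real.exp (c * u) := by
          calc u ^ σ ≤ u ^ n := h2.trans_eq h3
          _ ≤ _ := h5
    _ ≤ ((n.factorial : ℝ) / c ^ n + 1) * Real.exp (c * u) := by
        apply mul_le_mul_of_nonneg_right _ (Real.exp_pos _).le; linarith
-- appended lemmas (test)
open Complex in
lemma integ_rpow_mul {φ : ℝ → ℂ} (hφ : MemDL φ) {x σ : ℝ} (hx : 0 < x) (hσ : 0 ≤ σ) :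
    IntegrableOn (fun u => u ^ σ * (Real.exp (-(x * u)) * ‖φ u‖)) (Ioi (0:ℝ)) := by
  obtain ⟨C, hC0, hC⟩ := rpow_le_const_mul_exp (half_pos hx) hσ
  have hint := hφ.2.2 (x/2) (half_pos hx)
  refine Integrable.mono' (hint.const_mul C) ?_ ?_
  · apply Measurable.aestronglyMeasurable
    exact ((Real.continuous_rpow_const hσ).measurable.mul
      (((measurable_const.mul measurable_id).neg.exp).mul hφ.1.norm))
  · filter_upwards [ae_restrict_mem measurableSet_Ioi] with u hu
    have hu0 : (0:ℝ) < u := hu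
    rw [Real.norm_eq_abs, _root_.abs_of_nonneg (mul_nonneg (Real.rpow_nonneg hu0.le σ) (by positivity))]
    have key : u ^ σ * Real.exp (-(x*u)) ≤ C * Real.exp (-(x/2*u)) := by
      calc u ^ σ * Real.exp (-(x*u)) ≤ (C * Real.exp (x/2*u)) * Real.exp (-(x*u)) :=
            mul_le_mul_of_nonneg_right (hC u hu0) (Real.exp_pos _).le
      _ = C * Real.exp (-(x/2*u)) := by rw [mul_assoc, ← Real.exp_add]; ring_nf
    calc u ^ σ * (Real.exp (-(x*u)) * ‖φ u‖) = (u ^ σ * Real.exp (-(x*u))) * ‖φ u‖ := by ring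
    _ ≤ (C * Real.exp (-(x/2*u))) * ‖φ u‖ := mul_le_mul_of_nonneg_right key (norm_nonneg _)
    _ = C * (Real.exp (-(x/2*u)) * ‖φ u‖) := by ring

lemma aesm_kernel {φ : ℝ → ℂ} (hφm : Measurable φ) (t : ℝ) (s : ℂ) :
    AEStronglyMeasurable (fun u : ℝ => Complex.exp (-(t*u:ℝ)) * φ u * (u:ℂ)^(s-1))
      (MeasureTheory.volume.restrict (Ioi (0:ℝ))) := by
  refine AEStronglyMeasurable.mul (AEStronglyMeasurable.mul ?_ hφm.aestronglyMeasurable) ?_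
  · exact Continuous.aestronglyMeasurable (by fun_prop)
  · refine ContinuousOn.aestronglyMeasurable (fun u hu => ?_) measurableSet_Ioi
    exact (Complex.continuousAt_ofReal_cpow_const u (s-1) (Or.inr (ne_of_gt hu))).continuousWithinAt

lemma norm_kernel (φ : ℝ → ℂ) (t : ℝ) (s : ℂ) {u : ℝ} (hu : 0 < u) :
    ‖Complex.exp (-(t*u:ℝ)) * φ u * (u:ℂ)^(s-1)‖
      = u ^ (s.re - 1) * (Real.exp (-(t*u)) * ‖φ u‖) := by
  rw [norm_mul, norm_mul,
    Complex.norm_cpow_eq_rpow_re_of_pos hu,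
    Complex.norm_exp]
  simp only [Complex.ofReal_re, Complex.sub_re, Complex.one_re, Complex.neg_re]
  ring

lemma integrable_kernel {φ : ℝ → ℂ} (hφ : MemDL φ) {t : ℝ} (ht : 0 < t) {s : ℂ}
    (hs : 1 ≤ s.re) :
    IntegrableOn (fun u : ℝ => Complex.exp (-(t*u:ℝ)) * φ u * (u:ℂ)^(s-1)) (Ioi (0:ℝ)) := by
  refine Integrable.mono' (integ_rpow_mul hφ ht (by linarith : (0:ℝ) ≤ s.re - 1))
    (aesm_kernel hφ.1 t s) ?_
  filter_upwards [ae_restrict_mem measurableSet_Ioi] with u hu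
  rw [norm_kernel φ t s hu]

lemma hasDerivAt_int {φ : ℝ → ℂ} (hφ : MemDL φ) {t : ℝ} (ht : 0 < t) {s : ℂ} (hs : 1 ≤ s.re) :
    HasDerivAt (fun x : ℝ => ∫ u in Ioi (0:ℝ), Complex.exp (-(x*u:ℝ)) * φ u * (u:ℂ)^(s-1))
      (-∫ u in Ioi (0:ℝ), Complex.exp (-(t*u:ℝ)) * φ u * (u:ℂ)^s) t := by
  have hs0 : (0:ℝ) ≤ s.re := by linarith
  have key := hasDerivAt_integral_of_dominated_loc_of_deriv_le
    (F := fun x u => Complex.exp (-(x*u:ℝ)) * φ u * (u:ℂ)^(s-1))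
    (F' := fun x u => (-(u:ℂ)) * (Complex.exp (-(x*u:ℝ)) * φ u * (u:ℂ)^(s-1)))
    (μ := MeasureTheory.volume.restrict (Ioi (0:ℝ))) (x₀ := t)
    (bound := fun u => u ^ s.re * (Real.exp (-(t/2*u)) * ‖φ u‖))
    (Metric.ball_mem_nhds t (half_pos ht))
    (Filter.Eventually.of_forall fun x => aesm_kernel hφ.1 x s)
    (integrable_kernel hφ ht hs)
    (((Complex.measurable_ofReal.comp measurable_id).neg.aestronglyMeasurable).mul
      (aesm_kernel hφ.1 t s))
    ?_ (integ_rpow_mul hφ (half_pos ht) hs0) ?_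
  · -- conclude
    refine key.2.congr_deriv ?_
    rw [← MeasureTheory.integral_neg]
    refine MeasureTheory.setIntegral_congr_fun measurableSet_Ioi (fun u hu => ?_)
    have hu0 : (0:ℝ) < u := hu
    have hne : (u:ℂ) ≠ 0 := Complex.ofReal_ne_zero.mpr (ne_of_gt hu0)
    have h3 : (u:ℂ)^(s-1) * u = (u:ℂ)^s := by
      rw [Complex.cpow_sub _ _ hne, Complex.cpow_one]; field_simp
    rw [← h3]; ring
  · -- bound
    filter_upwards [ae_restrict_mem measurableSet_Ioi] with u hu x hx
    have hu0 : (0:ℝ) < u := hu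
    have hx2 : t/2 ≤ x := by
      rw [Metric.mem_ball, Real.dist_eq, abs_sub_lt_iff] at hx; linarith
    rw [norm_mul, norm_neg, Complex.norm_real, Real.norm_eq_abs,
      abs_of_pos hu0, norm_kernel φ x s hu0]
    have h1 : Real.exp (-(x*u)) ≤ Real.exp (-(t/2*u)) := by
      apply Real.exp_le_exp.mpr; nlinarith
    have h2 : u * (u ^ (s.re - 1)) = u ^ s.re := by
      rw [Real.rpow_sub hu0, Real.rpow_one]; field_simp
    calc u * (u ^ (s.re - 1) * (Real.exp (-(x*u)) * ‖φ u‖))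
        = u ^ s.re * (Real.exp (-(x*u)) * ‖φ u‖) := by rw [← h2]; ring
      _ ≤ u ^ s.re * (Real.exp (-(t/2*u)) * ‖φ u‖) := by
          apply mul_le_mul_of_nonneg_left _ (Real.rpow_nonneg hu0.le _)
          exact mul_le_mul_of_nonneg_right h1 (norm_nonneg _)
  · -- differentiability
    filter_upwards [ae_restrict_mem measurableSet_Ioi] with u hu x hx
    have d1 : HasDerivAt (fun x : ℝ => -(x*u)) (-u) x := by
      simpa using ((hasDerivAt_id x).mul_const u).fun_neg
    have d2 := (d1.ofReal_comp).cexp.mul_const (φ u * (u:ℂ)^(s-1))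
    simp only [Complex.ofReal_neg] at d2
    have : (fun x : ℝ => Complex.exp (-(x*u:ℝ)) * (φ u * (u:ℂ)^(s-1)))
        = fun x : ℝ => Complex.exp (-(x*u:ℝ)) * φ u * (u:ℂ)^(s-1) := by
      funext y; ring
    rw [this] at d2
    exact d2.congr_deriv (by push_cast; ring)

lemma hasDerivAt_LM {φ : ℝ → ℂ} (hφ : MemDL φ) {t : ℝ} (ht : 0 < t) {s : ℂ} (hs : 1 ≤ s.re) :
    HasDerivAt (fun x => LM φ s x) (-s * LM φ (s+1) t) t := by
  have hΓs : Complex.Gamma s ≠ 0 := Complex.Gamma_ne_zero_of_re_pos (by linarith)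
  have hΓs1 : Complex.Gamma (s+1) ≠ 0 := Complex.Gamma_ne_zero_of_re_pos (by
    simp only [Complex.add_re, Complex.one_re]; linarith)
  have h := (hasDerivAt_int hφ ht hs).const_mul (1 / Complex.Gamma s)
  have hI : (∫ u in Ioi (0:ℝ), Complex.exp (-(t*u:ℝ)) * φ u * (u:ℂ)^s)
      = Complex.Gamma (s+1) * LM φ (s+1) t := by
    rw [LM]
    have h11 : s + 1 - 1 = s := by ring
    rw [h11]; field_simp
  have hfun : (fun x : ℝ => (1 / Complex.Gamma s) *
      ∫ u in Ioi (0:ℝ), Complex.exp (-(x*u:ℝ)) * φ u * (u:ℂ)^(s-1)) = fun x => LM φ s x := by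
    funext x; rw [LM]
  rw [hfun] at h
  refine h.congr_deriv ?_
  rw [hI, Complex.Gamma_add_one s (by
    intro h0; rw [h0] at hs; norm_num at hs)]
  field_simp

lemma const_on_Ioi (g : ℝ → ℂ) (hdiff : ∀ x ∈ Ioi (0:ℝ), DifferentiableAt ℝ g x)
    (hzero : ∀ x ∈ Ioi (0:ℝ), deriv g x = 0) : ∀ x ∈ Ioi (0:ℝ), g x = g 1 := by
  intro x hx
  apply (convex_Ioi (0:ℝ)).is_const_of_fderivWithin_eq_zero (𝕜 := ℝ)
    (fun y hy => (hdiff y hy).differentiableWithinAt) ?_ hx (mem_Ioi.mpr one_pos)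
  intro y hy
  rw [fderivWithin_of_isOpen isOpen_Ioi hy]
  have hD : HasDerivAt g 0 y := by
    have := (hdiff y hy).hasDerivAt
    rwa [hzero y hy] at this
  have hF : HasFDerivAt g (0 : ℝ →L[ℝ] ℂ) y := by
    have := hD.hasFDerivAt
    rwa [ContinuousLinearMap.toSpanSingleton_zero] at this
  exact hF.fderiv

/-- for `f ∈ ℋ`, one has `∂ₜ f(s,t) = s f(s−1,t)` for all `s ∈ ℂ`, `t > 0`;
consequently, for every `n ∈ ℕ`, `t ↦ f(n,t)` coincides on `(0,∞)` with a polynomial of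
degree at most `n`. -/
theorem stmt10 (f : ℂ → ℝ → ℂ) (hf : MemH f) :
    (∀ s : ℂ, ∀ t ∈ Ioi (0:ℝ), deriv (f s) t = s * f (s - 1) t) ∧
    ∀ n : ℕ, ∃ p : Polynomial ℂ, p.natDegree ≤ n ∧
      ∀ t ∈ Ioi (0:ℝ), f (n : ℂ) t = p.eval (t : ℂ) := by
  obtain ⟨φ, h1, h2, h3, hφ, h5, h6⟩ := hf
  have hDL : MemDL φ := hφ.1
  have hA : ∀ s : ℂ, s.re < -1 → ∀ t ∈ Ioi (0:ℝ), deriv (f s) t = s * f (s-1) t := by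
    intro s hs t ht
    have ht0 : (0:ℝ) < t := ht
    have hres : 1 < (-s).re := by simp only [Complex.neg_re]; linarith
    have heq : f s =ᶠ[nhds t] (fun x => LM φ (-s) x) := by
      filter_upwards [isOpen_Ioi.mem_nhds ht] with x hx
      have := h6 (-s) hres x hx
      rwa [neg_neg] at this
    rw [heq.deriv_eq]
    rw [(hasDerivAt_LM hDL ht0 (le_of_lt hres)).deriv]
    have h1s : f (s-1) t = LM φ (-s+1) t := by
      have hre2 : 1 < (-(s-1)).re := by
        simp only [Complex.neg_re, Complex.sub_re, Complex.one_re]; linarith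
      have := h6 (-(s-1)) hre2 t ht
      rw [neg_neg] at this; rw [this]; congr 1; ring
    rw [h1s]; ring
  have hB : ∀ s : ℂ, ∀ t ∈ Ioi (0:ℝ), deriv (f s) t = s * f (s - 1) t := by
    intro s t ht
    set g : ℂ → ℂ := fun s => deriv (f s) t - s * f (s-1) t with hg
    have hgd : Differentiable ℂ g :=
      (h3 t ht).sub (differentiable_id.mul ((h2 t ht).comp (differentiable_id.sub_const 1)))
    have hzero : EqOn g 0 univ := by
      apply AnalyticOnNhd.eqOn_zero_of_preconnected_of_eventuallyEq_zero
        (fun z _ => hgd.analyticAt z) isPreconnected_univ (mem_univ (-2 : ℂ))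
      have hopen : IsOpen {z : ℂ | z.re < -1} := isOpen_lt Complex.continuous_re continuous_const
      have hmem : (-2 : ℂ) ∈ {z : ℂ | z.re < -1} := by
        simp only [mem_setOf_eq]; norm_num
      filter_upwards [hopen.mem_nhds hmem] with z hz
      simp only [hg, Pi.zero_apply]
      rw [hA z hz t ht]; ring
    have := hzero (mem_univ s)
    simp only [hg, Pi.zero_apply] at this
    exact sub_eq_zero.mp this
  refine ⟨hB, ?_⟩
  intro n
  induction n with
  | zero =>
    refine ⟨Polynomial.C (f 0 1), by simp, fun t ht => ?_⟩
    have hz : ∀ x ∈ Ioi (0:ℝ), deriv (f 0) x = 0 := by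
      intro x hx; rw [hB 0 x hx]; ring
    have := const_on_Ioi (f 0) (fun x hx => h1 0 x hx) hz t ht
    simpa using this
  | succ n ih =>
    obtain ⟨p, hpdeg, hp⟩ := ih
    set q : Polynomial ℂ := ∑ k ∈ Finset.range (n+1),
      Polynomial.C (((n:ℂ)+1) * p.coeff k / ((k:ℂ)+1)) * Polynomial.X ^ (k+1) with hq
    have hp' : p = ∑ k ∈ Finset.range (n+1), Polynomial.C (p.coeff k) * Polynomial.X ^ k := by
      conv_lhs => rw [p.as_sum_range' (n+1) (Nat.lt_succ_of_le hpdeg)]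
      exact Finset.sum_congr rfl fun k _ => (Polynomial.C_mul_X_pow_eq_monomial).symm
    have hder1 : ∀ k : ℕ,
        (Polynomial.C (((n:ℂ)+1) * p.coeff k / ((k:ℂ)+1)) * Polynomial.X ^ (k+1)).derivative
        = Polynomial.C (((n:ℂ)+1) * p.coeff k) * Polynomial.X ^ k := by
      intro k
      rw [Polynomial.derivative_C_mul_X_pow]
      simp only [Nat.add_sub_cancel]
      congr 1
      have hk1 : ((k:ℂ)+1) ≠ 0 := Nat.cast_add_one_ne_zero k
      push_cast
      field_simp
    have hqder : q.derivative = Polynomial.C ((n:ℂ)+1) * p := by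
      rw [hq, Polynomial.derivative_sum]
      calc ∑ k ∈ Finset.range (n+1),
            (Polynomial.C (((n:ℂ)+1) * p.coeff k / ((k:ℂ)+1)) * Polynomial.X ^ (k+1)).derivative
          = ∑ k ∈ Finset.range (n+1), Polynomial.C (((n:ℂ)+1) * p.coeff k) * Polynomial.X ^ k :=
            Finset.sum_congr rfl fun k _ => hder1 k
        _ = Polynomial.C ((n:ℂ)+1) * ∑ k ∈ Finset.range (n+1),
              Polynomial.C (p.coeff k) * Polynomial.X ^ k := by
            rw [Finset.mul_sum]
            exact Finset.sum_congr rfl fun k _ => by rw [Polynomial.C_mul]; ring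
        _ = Polynomial.C ((n:ℂ)+1) * p := by rw [← hp']
    have hqdeg : q.natDegree ≤ n + 1 := by
      rw [hq]
      refine Polynomial.natDegree_sum_le_of_forall_le _ _ (fun k hk => ?_)
      refine (Polynomial.natDegree_mul_le).trans ?_
      simp only [Polynomial.natDegree_C, Polynomial.natDegree_X_pow, zero_add]
      exact Nat.add_le_add_right (Finset.mem_range_succ_iff.mp hk) 1
    -- the function x ↦ q.eval x has derivative q.derivative.eval x
    have hqd : ∀ x : ℝ, HasDerivAt (fun y : ℝ => q.eval (y:ℂ)) (q.derivative.eval (x:ℂ)) x :=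
      fun x => (q.hasDerivAt (x:ℂ)).comp_ofReal
    set g : ℝ → ℂ := fun x => f ((n:ℂ)+1) x - q.eval (x:ℂ) with hgdef
    have hgdiff : ∀ x ∈ Ioi (0:ℝ), DifferentiableAt ℝ g x := by
      intro x hx
      exact (h1 _ x hx).sub (hqd x).differentiableAt
    have hgz : ∀ x ∈ Ioi (0:ℝ), deriv g x = 0 := by
      intro x hx
      have hder : deriv g x = deriv (f ((n:ℂ)+1)) x - q.derivative.eval (x:ℂ) := by
        rw [hgdef]
        rw [deriv_fun_sub (h1 _ x hx) (hqd x).differentiableAt, (hqd x).deriv]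
      rw [hder, hB ((n:ℂ)+1) x hx, hqder]
      have hfn : f ((n:ℂ)+1-1) x = p.eval (x:ℂ) := by
        have : (n:ℂ)+1-1 = (n:ℂ) := by ring
        rw [this]; exact hp x hx
      rw [hfn]
      simp
    have hconst := const_on_Ioi g hgdiff hgz
    refine ⟨q + Polynomial.C (f ((n:ℂ)+1) 1 - q.eval (1:ℂ)), ?_, ?_⟩
    · refine (Polynomial.natDegree_add_le _ _).trans ?_
      simp [hqdeg]
    · intro t ht
      have hc := hconst t ht
      have hcast : ((n+1 : ℕ) : ℂ) = (n:ℂ)+1 := by push_cast; ring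
      rw [hcast]
      simp only [hgdef] at hc
      simp only [Polynomial.eval_add, Polynomial.eval_C]
      have : ((1:ℝ):ℂ) = (1:ℂ) := by norm_num
      rw [this] at hc
      linear_combination hc
end

section
/- Let f ∈ ℋ with f(−1,·) = ℒ(φ), and suppose |φ(u)| u^{−Re(γ)} → 0 as u → 0⁺ for some γ ∈ ℂ with Re(γ) > −1. Then for every s ∈ ℂ with Re(s) > 1 and every t > 0, the series Σ_{n=0}^∞ f(−s−1, t+n) converges absolutely, the Bernoulli series (B f_{−s})(t) converges absolutely and locally uniformly, and s · Σ_{n=0}^∞ f(−s−1, t+n) = (B f_{−s})(t). -/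
open MeasureTheory Filter Set

noncomputable section AuxProof

lemma one_sub_exp_neg_pos {u : ℝ} (hu : 0 < u) : 0 < 1 - Real.exp (-u) := by
  simp only [sub_pos]
  exact Real.exp_lt_one_iff.mpr (by linarith)

lemma one_sub_exp_neg_le {u : ℝ} : 1 - Real.exp (-u) ≤ u := by
  have := Real.add_one_le_exp (-u)
  linarith

lemma one_le_weight {u : ℝ} (hu : 0 < u) : 1 ≤ u / (1 - Real.exp (-u)) :=
  (one_le_div (one_sub_exp_neg_pos hu)).mpr one_sub_exp_neg_le

lemma weight_le_exp {u : ℝ} (hu : 0 < u) : u / (1 - Real.exp (-u)) ≤ Real.exp u := by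
  rw [div_le_iff₀ (one_sub_exp_neg_pos hu)]
  have h1 := Real.add_one_le_exp u
  have h2 : Real.exp u * Real.exp (-u) = 1 := by
    rw [← Real.exp_add]; simp
  nlinarith [Real.exp_pos u]

lemma inv_one_sub_exp_neg_le_two {u : ℝ} (hu : 1 ≤ u) : 1 / (1 - Real.exp (-u)) ≤ 2 := by
  have h0 : (0:ℝ) < 1 - Real.exp (-u) := one_sub_exp_neg_pos (by linarith)
  rw [div_le_iff₀ h0]
  have : Real.exp (-u) ≤ Real.exp (-1) := Real.exp_le_exp.mpr (by linarith)
  have h2 : Real.exp (-1) ≤ 1/2 := by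
    rw [Real.exp_neg, inv_le_comm₀ (Real.exp_pos 1) (by norm_num)]
    nlinarith [Real.add_one_le_exp (1:ℝ)]
  linarith

/-- the dominating function -/
def gdom (φ : ℝ → ℂ) (σ t u : ℝ) : ℝ :=
  Real.exp (-(t*u)) * ‖φ u‖ * u ^ σ * (u / (1 - Real.exp (-u)))

lemma gdom_meas {φ : ℝ → ℂ} (hφ : Measurable φ) (σ t : ℝ) : Measurable (gdom φ σ t) := by
  have h1 : Measurable fun u : ℝ => Real.exp (-(t*u)) := by fun_prop
  have h2 : Measurable fun u : ℝ => u ^ σ := by fun_prop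
  have h3 : Measurable fun u : ℝ => u / (1 - Real.exp (-u)) := by fun_prop
  exact ((h1.mul hφ.norm).mul h2).mul h3

section Main

variable {φ : ℝ → ℂ} {γ : ℂ}

lemma gdom_nonneg {σ t u : ℝ} (hu : 0 < u) : 0 ≤ gdom φ σ t u := by
  have h := one_sub_exp_neg_pos hu
  unfold gdom; positivity

lemma smallO_bound (hsm : SmallO φ γ) :
    ∃ δ > 0, ∀ u ∈ Ioo (0:ℝ) δ, ‖φ u‖ ≤ u ^ γ.re := by
  have h1 : ∀ᶠ u in nhdsWithin 0 (Ioi 0), ‖φ u‖ * u ^ (-γ.re) < 1 :=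
    hsm.eventually_lt_const one_pos
  rw [eventually_iff] at h1
  obtain ⟨δ, hδ, hsub⟩ := mem_nhdsGT_iff_exists_Ioo_subset.mp h1
  refine ⟨δ, hδ, fun u hu => ?_⟩
  have hu0 : 0 < u := hu.1
  have h2 : ‖φ u‖ * u ^ (-γ.re) < 1 := hsub hu
  rw [Real.rpow_neg hu0.le, ← div_eq_mul_inv,
    div_lt_one (Real.rpow_pos_of_pos hu0 _)] at h2
  exact h2.le

lemma gdom_integrable (hφ : MemDL φ) (hsm : SmallO φ γ)
    (hγ : -1 < γ.re) {σ t : ℝ} (hσ : 0 ≤ σ) (ht : 0 < t) :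
    IntegrableOn (gdom φ σ t) (Ioi 0) := by
  obtain ⟨hm, hloc, hexp⟩ := hφ
  obtain ⟨δ, hδ, hb⟩ := smallO_bound hsm
  obtain ⟨M₀, hM₀⟩ := (tendsto_rpow_mul_exp_neg_mul_atTop_nhds_zero (σ+1) (t/2)
    (half_pos ht)).eventually_le_const one_pos |>.exists_forall_of_atTop
  set M : ℝ := max M₀ 2 with hMdef
  have hM2 : (2:ℝ) ≤ M := le_max_right _ _
  have hM1 : (1:ℝ) ≤ M := by linarith
  set a : ℝ := min δ 1 with hadef
  have ha0 : 0 < a := lt_min hδ one_pos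
  have ha1 : a ≤ 1 := min_le_right _ _
  have haM : a < M := by linarith
  have hmeas := gdom_meas hm σ t
  -- piece 1 : (0, a)
  have A1 : IntegrableOn (gdom φ σ t) (Ioo 0 a) := by
    have hint : IntegrableOn (fun u : ℝ => Real.exp 1 * u ^ (γ.re + σ)) (Ioo 0 a) := by
      refine Integrable.const_mul ?_ _
      have := intervalIntegral.intervalIntegrable_rpow' (a := 0) (b := a)
        (r := γ.re + σ) (by linarith)
      rw [intervalIntegrable_iff_integrableOn_Ioc_of_le ha0.le] at this
      exact this.mono_set Ioo_subset_Ioc_self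
    refine Integrable.mono hint (hmeas.aestronglyMeasurable.restrict) ?_
    rw [ae_restrict_iff' measurableSet_Ioo]
    refine ae_of_all _ fun u hu => ?_
    obtain ⟨hu0, hua⟩ := hu
    have hu1 : u ≤ 1 := le_trans hua.le ha1
    have huδ : u < δ := lt_of_lt_of_le hua (min_le_left _ _)
    rw [Real.norm_of_nonneg (gdom_nonneg hu0),
      Real.norm_of_nonneg (by positivity)]
    have b1 : Real.exp (-(t*u)) ≤ 1 := Real.exp_le_one_iff.mpr (by nlinarith)
    have b2 : ‖φ u‖ ≤ u ^ γ.re := hb u ⟨hu0, huδ⟩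
    have b3 : u / (1 - Real.exp (-u)) ≤ Real.exp 1 :=
      le_trans (weight_le_exp hu0) (Real.exp_le_exp.mpr hu1)
    have b4 : 0 ≤ u ^ σ := Real.rpow_nonneg hu0.le _
    calc gdom φ σ t u
        = (Real.exp (-(t*u)) * ‖φ u‖ * u ^ σ) * (u / (1 - Real.exp (-u))) := rfl
      _ ≤ (1 * u ^ γ.re * u ^ σ) * Real.exp 1 := by
          refine mul_le_mul ?_ b3 (le_of_lt (div_pos hu0 (one_sub_exp_neg_pos hu0)))
            (by positivity)
          exact mul_le_mul (mul_le_mul b1 b2 (norm_nonneg _) zero_le_one) le_rfl b4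
            (by positivity)
      _ = Real.exp 1 * u ^ (γ.re + σ) := by
          rw [Real.rpow_add hu0]; ring
  -- piece 2 : [a, M)
  have A2 : IntegrableOn (gdom φ σ t) (Ico a M) := by
    have hsub : Ico a M ⊆ Ioo 0 (M+1) := fun u hu => ⟨lt_of_lt_of_le ha0 hu.1,
      lt_of_lt_of_le hu.2 (by linarith)⟩
    have hnorm : IntegrableOn (fun u : ℝ => ‖φ u‖) (Ioo 0 (M+1)) :=
      (hloc (M+1) (by linarith)).norm
    have hint : IntegrableOn (fun u : ℝ => (M ^ σ * Real.exp M) * ‖φ u‖) (Ico a M) :=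
      (hnorm.mono_set hsub).const_mul _
    refine Integrable.mono hint (hmeas.aestronglyMeasurable.restrict) ?_
    rw [ae_restrict_iff' measurableSet_Ico]
    refine ae_of_all _ fun u hu => ?_
    obtain ⟨hua, huM⟩ := hu
    have hu0 : 0 < u := lt_of_lt_of_le ha0 hua
    have hMσ : (0:ℝ) ≤ M ^ σ := Real.rpow_nonneg (by linarith) _
    rw [Real.norm_of_nonneg (gdom_nonneg hu0), Real.norm_of_nonneg (by positivity)]
    have b1 : Real.exp (-(t*u)) ≤ 1 := Real.exp_le_one_iff.mpr (by nlinarith)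
    have b2 : u ^ σ ≤ M ^ σ := Real.rpow_le_rpow hu0.le huM.le hσ
    have b3 : u / (1 - Real.exp (-u)) ≤ Real.exp M :=
      le_trans (weight_le_exp hu0) (Real.exp_le_exp.mpr huM.le)
    calc gdom φ σ t u
        = (Real.exp (-(t*u)) * ‖φ u‖ * u ^ σ) * (u / (1 - Real.exp (-u))) := rfl
      _ ≤ (1 * ‖φ u‖ * M ^ σ) * Real.exp M := by
          refine mul_le_mul ?_ b3 (le_of_lt (div_pos hu0 (one_sub_exp_neg_pos hu0)))
            (by positivity)
          exact mul_le_mul (mul_le_mul b1 le_rfl (norm_nonneg _) zero_le_one) b2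
            (Real.rpow_nonneg hu0.le _) (by positivity)
      _ = M ^ σ * Real.exp M * ‖φ u‖ := by ring
  -- piece 3 : [M, ∞)
  have A3 : IntegrableOn (gdom φ σ t) (Ici M) := by
    have hsub : Ici M ⊆ Ioi 0 := fun u hu => lt_of_lt_of_le (by linarith : (0:ℝ) < M) hu
    have hint : IntegrableOn
        (fun u : ℝ => 2 * (Real.exp (-(t/2 * u)) * ‖φ u‖)) (Ici M) :=
      ((hexp (t/2) (half_pos ht)).mono_set hsub).const_mul _
    refine Integrable.mono hint (hmeas.aestronglyMeasurable.restrict) ?_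
    rw [ae_restrict_iff' measurableSet_Ici]
    refine ae_of_all _ fun u hu => ?_
    have hu0 : 0 < u := lt_of_lt_of_le (by linarith) hu
    rw [Real.norm_of_nonneg (gdom_nonneg hu0), Real.norm_of_nonneg (by positivity)]
    have b1 : u ^ (σ+1) * Real.exp (-(t/2) * u) ≤ 1 :=
      hM₀ u (le_trans (le_max_left _ _) hu)
    have b2 : 1 / (1 - Real.exp (-u)) ≤ 2 :=
      inv_one_sub_exp_neg_le_two (le_trans hM1 hu)
    have hw : 0 < 1 - Real.exp (-u) := one_sub_exp_neg_pos hu0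
    have key : gdom φ σ t u
        = (Real.exp (-(t/2 * u)) * ‖φ u‖) * ((u ^ (σ+1) * Real.exp (-(t/2) * u))
          * (1 / (1 - Real.exp (-u)))) := by
      unfold gdom
      rw [Real.rpow_add_one hu0.ne' σ]
      have : Real.exp (-(t*u)) = Real.exp (-(t/2 * u)) * Real.exp (-(t/2) * u) := by
        rw [← Real.exp_add]; ring_nf
      rw [this]; ring
    rw [key]
    calc (Real.exp (-(t/2 * u)) * ‖φ u‖) * ((u ^ (σ+1) * Real.exp (-(t/2) * u))
          * (1 / (1 - Real.exp (-u))))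
        ≤ (Real.exp (-(t/2 * u)) * ‖φ u‖) * (1 * 2) := by
          refine mul_le_mul le_rfl ?_ (by positivity) (by positivity)
          exact mul_le_mul b1 b2 (by positivity) zero_le_one
      _ = 2 * (Real.exp (-(t/2 * u)) * ‖φ u‖) := by ring
  have hset : Ioi (0:ℝ) = (Ioo 0 a ∪ Ico a M) ∪ Ici M := by
    rw [Ioo_union_Ico_eq_Ioo ha0 haM.le, Ioo_union_Ici_eq_Ioi (by linarith : (0:ℝ) < M)]
  rw [hset]
  exact (A1.union A2).union A3

lemma measurable_ofReal_cpow (c : ℂ) : Measurable fun u : ℝ => (u:ℂ)^c := by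
  have : (fun u : ℝ => (u:ℂ)^c) = fun u : ℝ =>
      if (u:ℂ) = 0 then (if c = 0 then 1 else 0) else Complex.exp (Complex.log u * c) := by
    ext u; rw [Complex.cpow_def]
  rw [this]
  refine Measurable.ite ?_ measurable_const ?_
  · convert MeasurableSet.singleton (0:ℝ) using 1
    ext u; simp [Complex.ofReal_eq_zero]
  · exact Complex.measurable_exp.comp ((Complex.measurable_ofReal.clog).mul measurable_const)

/-- the kernel for iterated differences of `f(-s)` -/
def Fker (φ : ℝ → ℂ) (s : ℂ) (n : ℕ) (t u : ℝ) : ℂ :=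
  (Complex.exp (-u : ℝ) - 1)^n * (Complex.exp (-(t*u) : ℝ) * φ u * (u:ℂ)^(s-1))

/-- the kernel for the shifted series of `f(-s-1)` -/
def Hker (φ : ℝ → ℂ) (s : ℂ) (n : ℕ) (t u : ℝ) : ℂ :=
  Complex.exp (-((t+n)*u) : ℝ) * φ u * (u:ℂ)^s

lemma Fker_norm {s : ℂ} {n : ℕ} {t u : ℝ} (hu : 0 < u) :
    ‖Fker φ s n t u‖ =
      (1 - Real.exp (-u))^n * (Real.exp (-(t*u)) * ‖φ u‖ * u ^ (s.re - 1)) := by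
  unfold Fker
  rw [norm_mul, norm_pow, norm_mul, norm_mul]
  congr 2
  · rw [← Complex.ofReal_exp, ← Complex.ofReal_one, ← Complex.ofReal_sub,
      Complex.norm_real, Real.norm_eq_abs, abs_of_nonpos (by
        have := Real.exp_lt_one_iff.mpr (neg_neg_iff_pos.mpr hu); linarith),
      neg_sub]
  · rw [← Complex.ofReal_exp, Complex.norm_real, Real.norm_eq_abs,
      abs_of_pos (Real.exp_pos _)]
  · rw [Complex.norm_cpow_eq_rpow_re_of_pos hu,
      Complex.sub_re, Complex.one_re]

lemma Hker_norm {s : ℂ} {n : ℕ} {t u : ℝ} (hu : 0 < u) :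
    ‖Hker φ s n t u‖ = Real.exp (-((t+n)*u)) * ‖φ u‖ * u ^ s.re := by
  unfold Hker
  rw [norm_mul, norm_mul]
  congr 1
  · congr 1
    rw [← Complex.ofReal_exp, Complex.norm_real, Real.norm_eq_abs,
      abs_of_pos (Real.exp_pos _)]
  · rw [Complex.norm_cpow_eq_rpow_re_of_pos hu]

lemma Fker_meas (hm : Measurable φ) (s : ℂ) (n : ℕ) (t : ℝ) :
    Measurable (Fker φ s n t) := by
  unfold Fker
  have h1 : Measurable fun u : ℝ => (Complex.exp (-u : ℝ) - 1)^n := by fun_prop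
  have h2 : Measurable fun u : ℝ => Complex.exp (-(t*u) : ℝ) := by fun_prop
  exact h1.mul ((h2.mul hm).mul (measurable_ofReal_cpow (s-1)))

lemma Hker_meas (hm : Measurable φ) (s : ℂ) (n : ℕ) (t : ℝ) :
    Measurable (Hker φ s n t) := by
  unfold Hker
  have h2 : Measurable fun u : ℝ => Complex.exp (-((t+n)*u) : ℝ) := by fun_prop
  exact (h2.mul hm).mul (measurable_ofReal_cpow s)

lemma Fker_norm_le_gdom {s : ℂ} {n : ℕ} {t u : ℝ} (hs : 1 ≤ s.re) (hu : 0 < u) :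
    ‖Fker φ s n t u‖ ≤ gdom φ (s.re - 1) t u := by
  rw [Fker_norm hu]
  have h1 : (1 - Real.exp (-u))^n ≤ 1 :=
    pow_le_one₀ (one_sub_exp_neg_pos hu).le (by nlinarith [Real.exp_pos (-u)])
  have hW : 0 ≤ Real.exp (-(t*u)) * ‖φ u‖ * u ^ (s.re - 1) := by positivity
  calc (1 - Real.exp (-u))^n * (Real.exp (-(t*u)) * ‖φ u‖ * u ^ (s.re - 1))
      ≤ 1 * (Real.exp (-(t*u)) * ‖φ u‖ * u ^ (s.re - 1)) :=
        mul_le_mul_of_nonneg_right h1 hW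
    _ ≤ (Real.exp (-(t*u)) * ‖φ u‖ * u ^ (s.re - 1)) * (u / (1 - Real.exp (-u))) := by
        rw [one_mul]
        exact le_mul_of_one_le_right hW (one_le_weight hu)
    _ = gdom φ (s.re - 1) t u := rfl

lemma Hker_norm_le_gdom {s : ℂ} {n : ℕ} {t u : ℝ} (hs : 1 ≤ s.re) (ht : 0 < t) (hu : 0 < u) :
    ‖Hker φ s n t u‖ ≤ gdom φ (s.re - 1) t u := by
  rw [Hker_norm hu]
  have hx := one_sub_exp_neg_pos hu
  have hr : Real.exp (-((t+n)*u)) ≤ Real.exp (-(t*u)) := by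
    apply Real.exp_le_exp.mpr
    have : (0:ℝ) ≤ (n:ℝ) * u := by positivity
    nlinarith
  have key : u ^ s.re = u ^ (s.re - 1) * u := by
    rw [← Real.rpow_add_one hu.ne']; ring_nf
  rw [key]
  have step1 : Real.exp (-((t+n)*u)) * ‖φ u‖ * (u ^ (s.re - 1) * u)
      ≤ Real.exp (-(t*u)) * ‖φ u‖ * (u ^ (s.re - 1) * u) := by
    have : (0:ℝ) ≤ ‖φ u‖ * (u ^ (s.re - 1) * u) := by positivity
    calc Real.exp (-((t+n)*u)) * ‖φ u‖ * (u ^ (s.re - 1) * u)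
        = Real.exp (-((t+n)*u)) * (‖φ u‖ * (u ^ (s.re - 1) * u)) := by ring
      _ ≤ Real.exp (-(t*u)) * (‖φ u‖ * (u ^ (s.re - 1) * u)) :=
          mul_le_mul_of_nonneg_right hr this
      _ = Real.exp (-(t*u)) * ‖φ u‖ * (u ^ (s.re - 1) * u) := by ring
  refine le_trans step1 ?_
  have step2 : u ≤ u / (1 - Real.exp (-u)) := by
    rw [le_div_iff₀ hx]
    nlinarith [Real.exp_pos (-u)]
  have : Real.exp (-(t*u)) * ‖φ u‖ * (u ^ (s.re - 1) * u)
      = (Real.exp (-(t*u)) * ‖φ u‖ * u ^ (s.re - 1)) * u := by ring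
  rw [this]
  exact mul_le_mul_of_nonneg_left step2 (by positivity)

lemma Fker_integrable (hφ : MemDL φ) (hsm : SmallO φ γ) (hγ : -1 < γ.re)
    {s : ℂ} (hs : 1 ≤ s.re) {t : ℝ} (ht : 0 < t) (n : ℕ) :
    IntegrableOn (Fker φ s n t) (Ioi 0) := by
  refine Integrable.mono (gdom_integrable hφ hsm hγ (σ := s.re - 1) (by linarith) ht)
    ((Fker_meas hφ.1 s n t).aestronglyMeasurable.restrict) ?_
  rw [ae_restrict_iff' measurableSet_Ioi]
  refine ae_of_all _ fun u hu => ?_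
  rw [Real.norm_of_nonneg (gdom_nonneg hu)]
  exact Fker_norm_le_gdom hs hu

lemma Hker_integrable (hφ : MemDL φ) (hsm : SmallO φ γ) (hγ : -1 < γ.re)
    {s : ℂ} (hs : 1 ≤ s.re) {t : ℝ} (ht : 0 < t) (n : ℕ) :
    IntegrableOn (Hker φ s n t) (Ioi 0) := by
  refine Integrable.mono (gdom_integrable hφ hsm hγ (σ := s.re - 1) (by linarith) ht)
    ((Hker_meas hφ.1 s n t).aestronglyMeasurable.restrict) ?_
  rw [ae_restrict_iff' measurableSet_Ioi]
  refine ae_of_all _ fun u hu => ?_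
  rw [Real.norm_of_nonneg (gdom_nonneg hu)]
  exact Hker_norm_le_gdom hs ht hu

/-- the log series: `HasSum (x^{n+1}/(n+1)) u` where `x = 1 - e^{-u}` -/
lemma hasSum_log_weight {u : ℝ} (hu : 0 < u) :
    HasSum (fun n : ℕ => (1 - Real.exp (-u)) ^ (n+1) / (n+1)) u := by
  have hx := one_sub_exp_neg_pos hu
  have hx1 : 1 - Real.exp (-u) < 1 := by nlinarith [Real.exp_pos (-u)]
  have h := Real.hasSum_pow_div_log_of_abs_lt_one
    (x := 1 - Real.exp (-u)) (by rw [abs_of_pos hx]; exact hx1)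
  have : -Real.log (1 - (1 - Real.exp (-u))) = u := by
    rw [show (1 - (1 - Real.exp (-u))) = Real.exp (-u) by ring, Real.log_exp]; ring
  rwa [this] at h

lemma hasSum_log_weight' {u : ℝ} (hu : 0 < u) :
    HasSum (fun n : ℕ => (1 - Real.exp (-u)) ^ n / (n+1))
      (u / (1 - Real.exp (-u))) := by
  have hx := one_sub_exp_neg_pos hu
  have h := (hasSum_log_weight hu).mul_left (1 - Real.exp (-u))⁻¹
  rw [← div_eq_inv_mul] at h
  convert h using 2 with n
  · rfl
  rw [pow_succ]
  field_simp

lemma sum_log_weight_le {u : ℝ} (hu : 0 < u) (N : ℕ) :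
    ∑ n ∈ Finset.range N, (1 - Real.exp (-u)) ^ n / (n+1)
      ≤ u / (1 - Real.exp (-u)) := by
  refine sum_le_hasSum _ (fun n _ => ?_) (hasSum_log_weight' hu)
  have hx := one_sub_exp_neg_pos hu
  positivity

def Gker (φ : ℝ → ℂ) (s : ℂ) (n : ℕ) (t u : ℝ) : ℂ :=
  ((-1:ℂ)^n / ((n:ℂ)+1)) * Fker φ s n t u

lemma Gker_norm {s : ℂ} {n : ℕ} {t u : ℝ} :
    ‖Gker φ s n t u‖ = (1/((n:ℝ)+1)) * ‖Fker φ s n t u‖ := by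
  unfold Gker
  rw [norm_mul, norm_div, norm_pow, norm_neg, norm_one, one_pow]
  congr 1
  rw [show ((n:ℂ)+1) = (((n+1:ℕ)):ℂ) by push_cast; ring, Complex.norm_natCast]
  push_cast; ring

lemma Gker_integrable (hφ : MemDL φ) (hsm : SmallO φ γ) (hγ : -1 < γ.re)
    {s : ℂ} (hs : 1 ≤ s.re) {t : ℝ} (ht : 0 < t) (n : ℕ) :
    IntegrableOn (Gker φ s n t) (Ioi 0) :=
  (Fker_integrable hφ hsm hγ hs ht n).const_mul _

lemma diff_rep {f : ℂ → ℝ → ℂ} (hφ : MemDL φ) (hsm : SmallO φ γ) (hγ : -1 < γ.re)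
    (hLM : ∀ s : ℂ, 1 < s.re → ∀ t ∈ Ioi (0:ℝ), f (-s) t = LM φ s t)
    {s : ℂ} (hs : 1 < s.re) (n : ℕ) :
    ∀ t : ℝ, 0 < t → (Dh 1)^[n] (f (-s)) t =
      (1 / Complex.Gamma s) * ∫ u in Ioi (0:ℝ), Fker φ s n t u := by
  induction n with
  | zero =>
    intro t ht
    rw [Function.iterate_zero_apply, hLM s hs t ht]
    unfold LM
    congr 1
    refine setIntegral_congr_fun measurableSet_Ioi (fun u _ => ?_)
    unfold Fker
    rw [pow_zero, one_mul]
    norm_cast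
  | succ n ih =>
    intro t ht
    rw [Function.iterate_succ_apply']
    show (Dh 1)^[n] (f (-s)) (t+1) - (Dh 1)^[n] (f (-s)) t = _
    rw [ih (t+1) (by linarith), ih t ht, ← mul_sub,
      ← integral_sub (Fker_integrable hφ hsm hγ hs.le (by linarith) n)
        (Fker_integrable hφ hsm hγ hs.le ht n)]
    congr 1
    refine setIntegral_congr_fun measurableSet_Ioi (fun u _ => ?_)
    unfold Fker
    have he : ((-((t+1)*u) : ℝ) : ℂ) = ((-(t*u) : ℝ) : ℂ) + ((-u : ℝ) : ℂ) := by
      push_cast; ring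
    rw [pow_succ, he, Complex.exp_add]
    ring

lemma BTerm_rep {f : ℂ → ℝ → ℂ} (hφ : MemDL φ) (hsm : SmallO φ γ) (hγ : -1 < γ.re)
    (hLM : ∀ s : ℂ, 1 < s.re → ∀ t ∈ Ioi (0:ℝ), f (-s) t = LM φ s t)
    {s : ℂ} (hs : 1 < s.re) (n : ℕ) {t : ℝ} (ht : 0 < t) :
    BTerm 1 (f (-s)) n t = (1 / Complex.Gamma s) * ∫ u in Ioi (0:ℝ), Gker φ s n t u := by
  unfold BTerm
  rw [diff_rep hφ hsm hγ hLM hs n t ht]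
  unfold Gker
  rw [MeasureTheory.integral_const_mul]
  ring

lemma sum_Gker_norm_le {s : ℂ} (hs : 1 ≤ s.re) {t u : ℝ} (hu : 0 < u) (N : ℕ) :
    ∑ n ∈ Finset.range N, ‖Gker φ s n t u‖ ≤ gdom φ (s.re - 1) t u := by
  have hx := one_sub_exp_neg_pos hu
  have hW : (0:ℝ) ≤ Real.exp (-(t*u)) * ‖φ u‖ * u ^ (s.re - 1) := by positivity
  calc ∑ n ∈ Finset.range N, ‖Gker φ s n t u‖
      = (∑ n ∈ Finset.range N, (1 - Real.exp (-u))^n / (n+1)) *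
          (Real.exp (-(t*u)) * ‖φ u‖ * u ^ (s.re - 1)) := by
        rw [Finset.sum_mul]
        refine Finset.sum_congr rfl (fun n _ => ?_)
        rw [Gker_norm, Fker_norm hu]
        ring
    _ ≤ (u / (1 - Real.exp (-u))) * (Real.exp (-(t*u)) * ‖φ u‖ * u ^ (s.re - 1)) :=
        mul_le_mul_of_nonneg_right (sum_log_weight_le hu N) hW
    _ = gdom φ (s.re - 1) t u := by unfold gdom; ring

lemma Gker_int_norm_summable (hφ : MemDL φ) (hsm : SmallO φ γ) (hγ : -1 < γ.re)
    {s : ℂ} (hs : 1 ≤ s.re) {t : ℝ} (ht : 0 < t) :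
    Summable (fun n : ℕ => ∫ u in Ioi (0:ℝ), ‖Gker φ s n t u‖) := by
  refine summable_of_sum_range_le (c := ∫ u in Ioi (0:ℝ), gdom φ (s.re - 1) t u)
    (fun n => integral_nonneg (fun u => norm_nonneg _)) (fun N => ?_)
  rw [← MeasureTheory.integral_finset_sum _
    (fun n _ => (Gker_integrable hφ hsm hγ hs ht n).norm)]
  refine setIntegral_mono_on ?_ (gdom_integrable hφ hsm hγ (σ := s.re - 1) (by linarith) ht)
    measurableSet_Ioi (fun u hu => sum_Gker_norm_le hs hu N)
  exact MeasureTheory.integrable_finset_sum _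
    (fun n _ => (Gker_integrable hφ hsm hγ hs ht n).norm)

lemma Gker_tsum {s : ℂ} {t u : ℝ} (hu : 0 < u) :
    ∑' n : ℕ, Gker φ s n t u = (((u / (1 - Real.exp (-u))) : ℝ) : ℂ) *
      (Complex.exp (-(t*u) : ℝ) * φ u * (u:ℂ)^(s-1)) := by
  have key : ∀ n : ℕ, Gker φ s n t u =
      ((((1 - Real.exp (-u))^n / (n+1)) : ℝ) : ℂ) *
        (Complex.exp (-(t*u) : ℝ) * φ u * (u:ℂ)^(s-1)) := by
    intro n
    unfold Gker Fker
    have h1 : ((-1:ℂ))^n * (Complex.exp (-u : ℝ) - 1)^n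
        = (1 - Complex.exp (-u : ℝ))^n := by
      rw [← mul_pow]; congr 1; ring
    have h2 : (1:ℂ) - Complex.exp (-u : ℝ) = (((1 - Real.exp (-u)) : ℝ) : ℂ) := by
      rw [Complex.ofReal_sub, Complex.ofReal_one, Complex.ofReal_exp]
    have h3 : ((n:ℂ)+1) = ((((n:ℝ)+1) : ℝ) : ℂ) := by push_cast; ring
    rw [h2] at h1
    calc ((-1:ℂ)^n / ((n:ℂ)+1)) *
          ((Complex.exp (-u : ℝ) - 1)^n *
            (Complex.exp (-(t*u) : ℝ) * φ u * (u:ℂ)^(s-1)))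
        = ((-1:ℂ)^n * (Complex.exp (-u : ℝ) - 1)^n) *
            (Complex.exp (-(t*u) : ℝ) * φ u * (u:ℂ)^(s-1)) / ((n:ℂ)+1) := by ring
      _ = ((((1 - Real.exp (-u)) : ℝ) : ℂ))^n *
            (Complex.exp (-(t*u) : ℝ) * φ u * (u:ℂ)^(s-1)) / ((((n:ℝ)+1) : ℝ) : ℂ) := by
          rw [h1, h3]
      _ = _ := by push_cast; ring
  rw [tsum_congr key]
  refine HasSum.tsum_eq ?_
  exact (Complex.hasSum_ofReal.mpr (hasSum_log_weight' hu)).mul_right _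

lemma Gker_int_norm_mono (hφ : MemDL φ) (hsm : SmallO φ γ) (hγ : -1 < γ.re)
    {s : ℂ} (hs : 1 ≤ s.re) {a t : ℝ} (ha : 0 < a) (hat : a ≤ t) (n : ℕ) :
    (∫ u in Ioi (0:ℝ), ‖Gker φ s n t u‖) ≤ ∫ u in Ioi (0:ℝ), ‖Gker φ s n a u‖ := by
  refine setIntegral_mono_on ((Gker_integrable hφ hsm hγ hs (lt_of_lt_of_le ha hat) n).norm)
    ((Gker_integrable hφ hsm hγ hs ha n).norm) measurableSet_Ioi (fun u hu => ?_)
  rw [Gker_norm, Fker_norm hu, Gker_norm, Fker_norm hu]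
  have : Real.exp (-(t*u)) ≤ Real.exp (-(a*u)) := by
    apply Real.exp_le_exp.mpr
    have hu' : (0:ℝ) < u := hu
    nlinarith
  have hu' : (0:ℝ) < u := hu
  gcongr
  exact pow_nonneg (one_sub_exp_neg_pos hu').le n

lemma Bop_rep {f : ℂ → ℝ → ℂ} (hφ : MemDL φ) (hsm : SmallO φ γ) (hγ : -1 < γ.re)
    (hLM : ∀ s : ℂ, 1 < s.re → ∀ t ∈ Ioi (0:ℝ), f (-s) t = LM φ s t)
    {s : ℂ} (hs : 1 < s.re) {t : ℝ} (ht : 0 < t) :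
    Bop 1 (f (-s)) t = (1 / Complex.Gamma s) *
      ∫ u in Ioi (0:ℝ), (((u / (1 - Real.exp (-u))) : ℝ) : ℂ) *
        (Complex.exp (-(t*u) : ℝ) * φ u * (u:ℂ)^(s-1)) := by
  have hsum := hasSum_integral_of_summable_integral_norm (μ := volume.restrict (Ioi 0))
    (F := fun (n : ℕ) (u : ℝ) => Gker φ s n t u)
    (fun n => Gker_integrable hφ hsm hγ hs.le ht n)
    (Gker_int_norm_summable hφ hsm hγ hs.le ht)
  unfold Bop
  calc ∑' n : ℕ, BTerm 1 (f (-s)) n t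
      = ∑' n : ℕ, (1/Complex.Gamma s) * ∫ u in Ioi (0:ℝ), Gker φ s n t u :=
        tsum_congr (fun n => BTerm_rep hφ hsm hγ hLM hs n ht)
    _ = (1/Complex.Gamma s) * ∑' n : ℕ, ∫ u in Ioi (0:ℝ), Gker φ s n t u := tsum_mul_left
    _ = (1/Complex.Gamma s) * ∫ u in Ioi (0:ℝ), ∑' n : ℕ, Gker φ s n t u := by
        rw [hsum.tsum_eq]
    _ = _ := by
        congr 1
        exact setIntegral_congr_fun measurableSet_Ioi (fun u hu => Gker_tsum hu)

lemma sum_Hker_norm_le {s : ℂ} (hs : 1 ≤ s.re) {t u : ℝ} (ht : 0 < t) (hu : 0 < u) (N : ℕ) :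
    ∑ n ∈ Finset.range N, ‖Hker φ s n t u‖ ≤ gdom φ (s.re - 1) t u := by
  have hx := one_sub_exp_neg_pos hu
  have hr1 : Real.exp (-u) < 1 := by nlinarith
  have hW : (0:ℝ) ≤ Real.exp (-(t*u)) * ‖φ u‖ * u ^ s.re := by positivity
  have hgeo : ∑ n ∈ Finset.range N, (Real.exp (-u))^n ≤ (1 - Real.exp (-u))⁻¹ :=
    sum_le_hasSum _ (fun n _ => by positivity)
      (hasSum_geometric_of_lt_one (Real.exp_pos _).le hr1)
  have hxe : (0:ℝ) ≤ 1 - Real.exp (-u) := hx.le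
  calc ∑ n ∈ Finset.range N, ‖Hker φ s n t u‖
      = (∑ n ∈ Finset.range N, (Real.exp (-u))^n) *
          (Real.exp (-(t*u)) * ‖φ u‖ * u ^ s.re) := by
        rw [Finset.sum_mul]
        refine Finset.sum_congr rfl (fun n _ => ?_)
        rw [Hker_norm hu]
        have : Real.exp (-((t+n)*u)) = Real.exp (-u)^n * Real.exp (-(t*u)) := by
          rw [← Real.exp_nat_mul, ← Real.exp_add]
          congr 1; ring
        rw [this]; ring
    _ ≤ (1 - Real.exp (-u))⁻¹ * (Real.exp (-(t*u)) * ‖φ u‖ * u ^ s.re) :=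
        mul_le_mul_of_nonneg_right hgeo hW
    _ = gdom φ (s.re - 1) t u := by
        unfold gdom
        rw [show u ^ s.re = u ^ (s.re - 1) * u by
          rw [← Real.rpow_add_one hu.ne']; ring_nf]
        field_simp

lemma Hker_int_norm_summable (hφ : MemDL φ) (hsm : SmallO φ γ) (hγ : -1 < γ.re)
    {s : ℂ} (hs : 1 ≤ s.re) {t : ℝ} (ht : 0 < t) :
    Summable (fun n : ℕ => ∫ u in Ioi (0:ℝ), ‖Hker φ s n t u‖) := by
  refine summable_of_sum_range_le (c := ∫ u in Ioi (0:ℝ), gdom φ (s.re - 1) t u)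
    (fun n => integral_nonneg (fun u => norm_nonneg _)) (fun N => ?_)
  rw [← MeasureTheory.integral_finset_sum _
    (fun n _ => (Hker_integrable hφ hsm hγ hs ht n).norm)]
  refine setIntegral_mono_on ?_ (gdom_integrable hφ hsm hγ (σ := s.re - 1) (by linarith) ht)
    measurableSet_Ioi (fun u hu => sum_Hker_norm_le hs ht hu N)
  exact MeasureTheory.integrable_finset_sum _
    (fun n _ => (Hker_integrable hφ hsm hγ hs ht n).norm)

lemma Hker_tsum {s : ℂ} {t u : ℝ} (hu : 0 < u) :
    ∑' n : ℕ, Hker φ s n t u = (((1 - Real.exp (-u))⁻¹ : ℝ) : ℂ) *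
      (Complex.exp (-(t*u) : ℝ) * φ u * (u:ℂ)^s) := by
  have hr1 : Real.exp (-u) < 1 := by nlinarith [one_sub_exp_neg_pos hu]
  have key : ∀ n : ℕ, Hker φ s n t u =
      (((Real.exp (-u))^n : ℝ) : ℂ) * (Complex.exp (-(t*u) : ℝ) * φ u * (u:ℂ)^s) := by
    intro n
    unfold Hker
    have h1 : ((-((t+(n:ℝ))*u) : ℝ) : ℂ) = ((-(t*u) : ℝ) : ℂ) + (((n:ℝ)*(-u) : ℝ) : ℂ) := by
      push_cast; ring
    have h4 : Complex.exp ((((n:ℝ)*(-u) : ℝ)) : ℂ) = (((Real.exp (-u))^n : ℝ) : ℂ) := by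
      rw [← Complex.ofReal_exp]
      norm_cast
      rw [Real.exp_nat_mul]
    rw [h1, Complex.exp_add, h4]
    ring
  rw [tsum_congr key]
  refine HasSum.tsum_eq ?_
  exact (Complex.hasSum_ofReal.mpr
    (hasSum_geometric_of_lt_one (Real.exp_pos _).le hr1)).mul_right _

lemma BTerm_bound {f : ℂ → ℝ → ℂ} (hφ : MemDL φ) (hsm : SmallO φ γ) (hγ : -1 < γ.re)
    (hLM : ∀ s : ℂ, 1 < s.re → ∀ t ∈ Ioi (0:ℝ), f (-s) t = LM φ s t)
    {s : ℂ} (hs : 1 < s.re) {a t : ℝ} (ha : 0 < a) (hat : a ≤ t) (n : ℕ) :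
    ‖BTerm 1 (f (-s)) n t‖ ≤
      ‖1 / Complex.Gamma s‖ * ∫ u in Ioi (0:ℝ), ‖Gker φ s n a u‖ := by
  rw [BTerm_rep hφ hsm hγ hLM hs n (lt_of_lt_of_le ha hat), norm_mul]
  refine mul_le_mul_of_nonneg_left ?_ (norm_nonneg _)
  exact le_trans (norm_integral_le_integral_norm _)
    (Gker_int_norm_mono hφ hsm hγ hs.le ha hat n)

lemma shifted_rep {f : ℂ → ℝ → ℂ} (hφ : MemDL φ) (hsm : SmallO φ γ) (hγ : -1 < γ.re)
    (hLM : ∀ s : ℂ, 1 < s.re → ∀ t ∈ Ioi (0:ℝ), f (-s) t = LM φ s t)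
    {s : ℂ} (hs : 1 < s.re) {t : ℝ} (ht : 0 < t) (n : ℕ) :
    f (-s - 1) (t + n) = (1 / Complex.Gamma (s+1)) *
      ∫ u in Ioi (0:ℝ), Hker φ s n t u := by
  have h1 : (-s - 1 : ℂ) = -(s+1) := by ring
  have hre : 1 < (s+1).re := by
    rw [Complex.add_re, Complex.one_re]; linarith
  have htn : (0:ℝ) < t + n := by positivity
  rw [h1, hLM (s+1) hre (t+n) htn]
  unfold LM
  congr 1
  refine setIntegral_congr_fun measurableSet_Ioi (fun u _ => ?_)
  unfold Hker
  rw [add_sub_cancel_right]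
  norm_cast

lemma shifted_summable {f : ℂ → ℝ → ℂ} (hφ : MemDL φ) (hsm : SmallO φ γ) (hγ : -1 < γ.re)
    (hLM : ∀ s : ℂ, 1 < s.re → ∀ t ∈ Ioi (0:ℝ), f (-s) t = LM φ s t)
    {s : ℂ} (hs : 1 < s.re) {t : ℝ} (ht : 0 < t) :
    Summable (fun n : ℕ => ‖f (-s - 1) (t + n)‖) := by
  refine Summable.of_nonneg_of_le (fun n => norm_nonneg _) (fun n => ?_)
    ((Hker_int_norm_summable hφ hsm hγ hs.le ht).mul_left ‖1 / Complex.Gamma (s+1)‖)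
  rw [shifted_rep hφ hsm hγ hLM hs ht n, norm_mul]
  exact mul_le_mul_of_nonneg_left (norm_integral_le_integral_norm _) (norm_nonneg _)

lemma shifted_tsum {f : ℂ → ℝ → ℂ} (hφ : MemDL φ) (hsm : SmallO φ γ) (hγ : -1 < γ.re)
    (hLM : ∀ s : ℂ, 1 < s.re → ∀ t ∈ Ioi (0:ℝ), f (-s) t = LM φ s t)
    {s : ℂ} (hs : 1 < s.re) {t : ℝ} (ht : 0 < t) :
    ∑' n : ℕ, f (-s - 1) (t + n) = (1 / Complex.Gamma (s+1)) *
      ∫ u in Ioi (0:ℝ), (((1 - Real.exp (-u))⁻¹ : ℝ) : ℂ) *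
        (Complex.exp (-(t*u) : ℝ) * φ u * (u:ℂ)^s) := by
  have hsum := hasSum_integral_of_summable_integral_norm (μ := volume.restrict (Ioi 0))
    (F := fun (n : ℕ) (u : ℝ) => Hker φ s n t u)
    (fun n => Hker_integrable hφ hsm hγ hs.le ht n)
    (Hker_int_norm_summable hφ hsm hγ hs.le ht)
  calc ∑' n : ℕ, f (-s - 1) (t + n)
      = ∑' n : ℕ, (1/Complex.Gamma (s+1)) * ∫ u in Ioi (0:ℝ), Hker φ s n t u :=
        tsum_congr (fun n => shifted_rep hφ hsm hγ hLM hs ht n)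
    _ = (1/Complex.Gamma (s+1)) * ∑' n : ℕ, ∫ u in Ioi (0:ℝ), Hker φ s n t u := tsum_mul_left
    _ = (1/Complex.Gamma (s+1)) * ∫ u in Ioi (0:ℝ), ∑' n : ℕ, Hker φ s n t u := by
        rw [hsum.tsum_eq]
    _ = _ := by
        congr 1
        exact setIntegral_congr_fun measurableSet_Ioi (fun u hu => Hker_tsum hu)

end Main

theorem stmt11' (f : ℂ → ℝ → ℂ) (φ : ℝ → ℂ)
    (hφ : MemDL φ)
    (hLM : ∀ s : ℂ, 1 < s.re → ∀ t ∈ Ioi (0:ℝ), f (-s) t = LM φ s t)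
    (γ : ℂ) (hγ : -1 < γ.re) (hsm : SmallO φ γ) :
    ∀ s : ℂ, 1 < s.re →
      ALUOn (BTerm 1 (f (-s))) (Ioi 0) ∧
      ∀ t ∈ Ioi (0:ℝ),
        (Summable fun n : ℕ => ‖f (-s - 1) (t + n)‖) ∧
        s * ∑' n : ℕ, f (-s - 1) (t + n) = Bop 1 (f (-s)) t := by
  intro s hs
  have hs0 : s ≠ 0 := by
    intro h; rw [h] at hs; simp at hs; linarith
  have hΓ : Complex.Gamma s ≠ 0 := Complex.Gamma_ne_zero_of_re_pos (by linarith)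
  constructor
  · constructor
    · intro t ht
      refine Summable.of_nonneg_of_le (fun n => norm_nonneg _)
        (fun n => ?_)
        ((Gker_int_norm_summable hφ hsm hγ hs.le ht).mul_left ‖1 / Complex.Gamma s‖)
      exact BTerm_bound hφ hsm hγ hLM hs ht le_rfl n
    · rw [tendstoLocallyUniformlyOn_iff_forall_isCompact isOpen_Ioi]
      intro K hKsub hKc
      rcases K.eq_empty_or_nonempty with rfl | hne
      · exact tendstoUniformlyOn_empty
      · obtain ⟨a, haK, hlb⟩ := hKc.exists_isLeast hne
        have ha : (0:ℝ) < a := hKsub haK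
        refine tendstoUniformlyOn_tsum_nat
          ((Gker_int_norm_summable hφ hsm hγ hs.le ha).mul_left ‖1 / Complex.Gamma s‖)
          (fun n t htK => ?_)
        exact BTerm_bound hφ hsm hγ hLM hs ha (hlb htK) n
  · intro t ht
    refine ⟨shifted_summable hφ hsm hγ hLM hs ht, ?_⟩
    rw [shifted_tsum hφ hsm hγ hLM hs ht, Bop_rep hφ hsm hγ hLM hs ht]
    have hint : (∫ u in Ioi (0:ℝ), (((1 - Real.exp (-u))⁻¹ : ℝ) : ℂ) *
        (Complex.exp (-(t*u) : ℝ) * φ u * (u:ℂ)^s))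
        = ∫ u in Ioi (0:ℝ), (((u / (1 - Real.exp (-u))) : ℝ) : ℂ) *
        (Complex.exp (-(t*u) : ℝ) * φ u * (u:ℂ)^(s-1)) := by
      refine setIntegral_congr_fun measurableSet_Ioi (fun u hu => ?_)
      have hu' : (0:ℝ) < u := hu
      have hcu : ((u:ℝ):ℂ) ≠ 0 := Complex.ofReal_ne_zero.mpr hu'.ne'
      have hpow : ((u:ℝ):ℂ)^s = ((u:ℝ):ℂ)^(s-1) * ((u:ℝ):ℂ) := by
        have h := Complex.cpow_add (s-1) 1 hcu
        rw [Complex.cpow_one] at h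
        simpa using h
      rw [hpow]
      push_cast
      rw [div_eq_mul_inv]
      ring
    rw [hint, Complex.Gamma_add_one s hs0]
    have : s * (1 / (s * Complex.Gamma s)) = 1 / Complex.Gamma s := by
      field_simp
    rw [← mul_assoc, this]


end AuxProof

/-- for `f ∈ ℋ` with `f(−1,·) = ℒ(φ)` and `φ(u) = o(u^γ)` as `u → 0⁺`,
`Re γ > −1`: for all `s` with `Re s > 1` and all `t > 0`, `Σ_{n≥0} f(−s−1, t+n)` converges
absolutely, the Bernoulli series of `f_{−s}` converges absolutely and locally uniformly on
`(0,∞)`, and `s Σ_{n≥0} f(−s−1, t+n) = (B f_{−s})(t)`. -/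
theorem stmt11 (f : ℂ → ℝ → ℂ) (φ : ℝ → ℂ) (hf : MemHwith f φ)
    (γ : ℂ) (hγ : -1 < γ.re) (hsm : SmallO φ γ) :
    ∀ s : ℂ, 1 < s.re →
      ALUOn (BTerm 1 (f (-s))) (Ioi 0) ∧
      ∀ t ∈ Ioi (0:ℝ),
        (Summable fun n : ℕ => ‖f (-s - 1) (t + n)‖) ∧
        s * ∑' n : ℕ, f (-s - 1) (t + n) = Bop 1 (f (-s)) t :=
  stmt11' f φ hf.2.2.2.1.1 hf.2.2.2.2.2 γ hγ hsm
end

section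
/- Let f ∈ ℋ with f(−1,·) = ℒ(φ), and suppose |φ(u)| u^{−Re(γ)} → 0 as u → 0⁺ for some γ ∈ ℂ with Re(γ) > −1. Then for every integer N ≥ 0, every s ∈ ℂ, and every t > 0: s · Σ_{n=0}^{N−1} f(−s−1, t+n) = (B f_{−s})(t) − (B f_{−s})(t+N), where both Bernoulli series converge absolutely and locally uniformly. -/
open MeasureTheory Filter Set

noncomputable section
namespace S12

open Complex

/-- The kernel `u ↦ e^{-tu} (e^{-u}-1)^n φ(u)`. -/
def Ker (φ : ℝ → ℂ) (n : ℕ) (t : ℝ) : ℝ → ℂ := fun u =>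
  ((Real.exp (-(t * u)) * (Real.exp (-u) - 1) ^ n : ℝ) : ℂ) * φ u

/-- The comparison integral. -/
def Jf (φ : ℝ → ℂ) (t σ : ℝ) (n : ℕ) : ℝ :=
  ∫ u in Ioi (0:ℝ), Real.exp (-(t * u)) * (1 - Real.exp (-u)) ^ n * (‖φ u‖ * u ^ (σ - 1))

lemma exp_neg_le_one {u : ℝ} (hu : 0 ≤ u) : Real.exp (-u) ≤ 1 :=
  Real.exp_le_one_iff.mpr (by linarith)

lemma one_sub_exp_nonneg {u : ℝ} (hu : 0 ≤ u) : 0 ≤ 1 - Real.exp (-u) := by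
  have := exp_neg_le_one hu; linarith

lemma one_sub_exp_le {u : ℝ} : 1 - Real.exp (-u) ≤ u := by
  have := Real.add_one_le_exp (-u); linarith

lemma ker_norm {φ : ℝ → ℂ} {u : ℝ} (hu : 0 ≤ u) (t : ℝ) (n : ℕ) :
    ‖Ker φ n t u‖ = Real.exp (-(t * u)) * (1 - Real.exp (-u)) ^ n * ‖φ u‖ := by
  have h0 : Real.exp (-u) - 1 ≤ 0 := sub_nonpos.mpr (exp_neg_le_one hu)
  rw [Ker, norm_mul, Complex.norm_real, Real.norm_eq_abs, abs_mul, _root_.abs_pow,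
    abs_of_pos (Real.exp_pos _), abs_of_nonpos h0, neg_sub]

lemma ker_meas {φ : ℝ → ℂ} (hφ : Measurable φ) (n : ℕ) (t : ℝ) : Measurable (Ker φ n t) := by
  apply Measurable.mul ?_ hφ
  apply Complex.measurable_ofReal.comp
  apply Measurable.mul
  · exact Real.measurable_exp.comp (measurable_const.mul measurable_id).neg
  · exact ((Real.measurable_exp.comp measurable_neg).sub measurable_const).pow_const n

lemma smallO_event {φ : ℝ → ℂ} {γ : ℂ} (hsm : SmallO φ γ) :
    ∀ᶠ u in nhdsWithin 0 (Ioi 0), ‖φ u‖ ≤ u ^ γ.re := by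
  filter_upwards [hsm.eventually_lt_const one_pos, self_mem_nhdsWithin] with u h1 h2
  have hu : (0:ℝ) < u := h2
  have hne : u ^ γ.re ≠ 0 := (Real.rpow_pos_of_pos hu _).ne'
  have h3 : ‖φ u‖ * (u ^ γ.re)⁻¹ ≤ 1 := by
    rw [← Real.rpow_neg hu.le]; exact h1.le
  calc ‖φ u‖ = ‖φ u‖ * (u ^ γ.re)⁻¹ * u ^ γ.re := by field_simp
    _ ≤ 1 * u ^ γ.re :=
        mul_le_mul_of_nonneg_right h3 (Real.rpow_nonneg hu.le _)
    _ = u ^ γ.re := one_mul _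

lemma grow {φ : ℝ → ℂ} (h : MemDLi φ) {ε : ℝ} (hε : 0 < ε) :
    ∃ C : ℝ, ∀ u : ℝ, 1 ≤ u → ‖φ u‖ ≤ C * Real.exp (ε * u) := by
  obtain ⟨hDL, ψ, hψDL, hψmono, hψdom⟩ := h
  set A := ∫ v in Ioi (0:ℝ), Real.exp (-(ε * v)) * ‖((ψ v : ℝ) : ℂ)‖ with hA
  have hAint : IntegrableOn (fun v => Real.exp (-(ε * v)) * ‖((ψ v : ℝ) : ℂ)‖) (Ioi 0) :=
    hψDL.2.2 ε hε
  refine ⟨A * Real.exp ε, fun u hu => ?_⟩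
  have hu0 : (0:ℝ) < u := by linarith
  have key : ψ u * Real.exp (-(ε * (u + 1))) ≤ A := by
    have hmono' : ∀ v ∈ Ioc u (u + 1),
        ψ u * Real.exp (-(ε * (u + 1))) ≤ Real.exp (-(ε * v)) * ‖((ψ v : ℝ) : ℂ)‖ := by
      intro v hv
      have hv0 : (0:ℝ) < v := lt_trans hu0 hv.1
      have h1 : ψ u ≤ ψ v := hψmono (mem_Ioi.mpr hu0) (mem_Ioi.mpr hv0) hv.1.le
      have h2 : Real.exp (-(ε * (u + 1))) ≤ Real.exp (-(ε * v)) := by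
        apply Real.exp_le_exp.mpr; nlinarith [hv.2]
      have h3 : (0:ℝ) ≤ ψ u := le_trans (norm_nonneg (φ u)) (hψdom u (mem_Ioi.mpr hu0))
      have h4 : ψ v ≤ ‖((ψ v : ℝ) : ℂ)‖ := by
        rw [Complex.norm_real, Real.norm_eq_abs]; exact le_abs_self _
      calc ψ u * Real.exp (-(ε * (u + 1))) ≤ ψ v * Real.exp (-(ε * v)) :=
            mul_le_mul h1 h2 (Real.exp_pos _).le (h3.trans h1)
        _ ≤ ‖((ψ v : ℝ) : ℂ)‖ * Real.exp (-(ε * v)) :=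
            mul_le_mul_of_nonneg_right h4 (Real.exp_pos _).le
        _ = Real.exp (-(ε * v)) * ‖((ψ v : ℝ) : ℂ)‖ := mul_comm _ _
    have hsub : Ioc u (u + 1) ⊆ Ioi (0:ℝ) := fun v hv => lt_trans hu0 hv.1
    have hIu : IntegrableOn (fun v => Real.exp (-(ε * v)) * ‖((ψ v : ℝ) : ℂ)‖) (Ioc u (u + 1)) :=
      hAint.mono_set hsub
    have c1 : ψ u * Real.exp (-(ε * (u + 1)))
        ≤ ∫ v in Ioc u (u + 1), Real.exp (-(ε * v)) * ‖((ψ v : ℝ) : ℂ)‖ := by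
      have hconst : ∫ (_ : ℝ) in Ioc u (u + 1), (ψ u * Real.exp (-(ε * (u + 1))))
          = ψ u * Real.exp (-(ε * (u + 1))) := by
        rw [setIntegral_const, measureReal_def, Real.volume_Ioc, add_sub_cancel_left, ENNReal.ofReal_one,
          ENNReal.toReal_one, one_smul]
      rw [← hconst]
      exact setIntegral_mono_on (integrableOn_const (by
        rw [Real.volume_Ioc]; exact ENNReal.ofReal_ne_top)) hIu measurableSet_Ioc hmono'
    have c2 : ∫ v in Ioc u (u + 1), Real.exp (-(ε * v)) * ‖((ψ v : ℝ) : ℂ)‖ ≤ A := by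
      apply setIntegral_mono_set hAint
      · exact Filter.Eventually.of_forall fun v => mul_nonneg (Real.exp_pos _).le (norm_nonneg _)
      · exact HasSubset.Subset.eventuallyLE hsub
    linarith
  have hkey2 : ψ u ≤ A * Real.exp ε * Real.exp (ε * u) := by
    have hhe : Real.exp (-(ε * (u + 1))) * (Real.exp ε * Real.exp (ε * u)) = 1 := by
      rw [← Real.exp_add, ← Real.exp_add]; rw [show -(ε * (u+1)) + (ε + ε * u) = 0 by ring,
        Real.exp_zero]
    have h6 := mul_le_mul_of_nonneg_right key
      (mul_nonneg (Real.exp_pos ε).le (Real.exp_pos (ε*u)).le)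
    calc ψ u = ψ u * (Real.exp (-(ε * (u + 1))) * (Real.exp ε * Real.exp (ε * u))) := by
          rw [hhe, mul_one]
      _ = ψ u * Real.exp (-(ε * (u + 1))) * (Real.exp ε * Real.exp (ε * u)) := by ring
      _ ≤ A * (Real.exp ε * Real.exp (ε * u)) := h6
      _ = A * Real.exp ε * Real.exp (ε * u) := by ring
  exact le_trans (hψdom u (mem_Ioi.mpr hu0)) hkey2

lemma ker_isBigO_zero {φ : ℝ → ℂ} {γ : ℂ} (hsm : SmallO φ γ) {t : ℝ} (ht : 0 ≤ t) (n : ℕ) :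
    (Ker φ n t) =O[nhdsWithin 0 (Ioi 0)] fun u => u ^ (γ.re + n) := by
  rw [Asymptotics.isBigO_iff]
  refine ⟨1, ?_⟩
  filter_upwards [smallO_event hsm, self_mem_nhdsWithin] with u h1 h2
  have hu : (0:ℝ) < u := h2
  rw [ker_norm hu.le]
  have e1 : Real.exp (-(t * u)) ≤ 1 := Real.exp_le_one_iff.mpr (by nlinarith)
  have e2 : (1 - Real.exp (-u)) ^ n ≤ u ^ n :=
    pow_le_pow_left₀ (one_sub_exp_nonneg hu.le) one_sub_exp_le n
  have e3 : ‖(u : ℝ) ^ (γ.re + n)‖ = u ^ γ.re * u ^ n := by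
    rw [Real.norm_eq_abs, abs_of_pos (Real.rpow_pos_of_pos hu _), Real.rpow_add hu,
      Real.rpow_natCast]
  rw [e3, one_mul]
  calc Real.exp (-(t * u)) * (1 - Real.exp (-u)) ^ n * ‖φ u‖
      ≤ 1 * u ^ n * u ^ γ.re := by
        apply mul_le_mul (mul_le_mul e1 e2 (pow_nonneg (one_sub_exp_nonneg hu.le) n) zero_le_one)
          h1 (norm_nonneg _) (by positivity)
    _ = u ^ γ.re * u ^ n := by ring

lemma ker_isBigO_top {φ : ℝ → ℂ} (h : MemDLi φ) {t : ℝ} (ht : 0 < t) (n : ℕ) (a : ℝ) :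
    (Ker φ n t) =O[atTop] fun u => u ^ (-a) := by
  obtain ⟨C, hC⟩ := grow h (half_pos ht)
  have hC0 : 0 ≤ C := by
    have h1 := (norm_nonneg (φ 1)).trans (hC 1 le_rfl)
    nlinarith [Real.exp_pos (t / 2 * 1)]
  rw [Asymptotics.isBigO_iff]
  refine ⟨C, ?_⟩
  have h2 : Tendsto (fun u : ℝ => u ^ a * Real.exp (-(t / 2) * u)) atTop (nhds 0) :=
    tendsto_rpow_mul_exp_neg_mul_atTop_nhds_zero a (t / 2) (half_pos ht)
  filter_upwards [eventually_ge_atTop (1:ℝ), h2.eventually_lt_const one_pos] with u hu1 hu2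
  have hu0 : (0:ℝ) < u := by linarith
  rw [ker_norm hu0.le]
  have e2 : (1 - Real.exp (-u)) ^ n ≤ 1 :=
    pow_le_one₀ (one_sub_exp_nonneg hu0.le) (by have := Real.exp_pos (-u); linarith)
  have hb : ‖φ u‖ ≤ C * Real.exp (t / 2 * u) := hC u hu1
  have hnorm : ‖(u : ℝ) ^ (-a)‖ = u ^ (-a) := by
    rw [Real.norm_eq_abs, abs_of_pos (Real.rpow_pos_of_pos hu0 _)]
  rw [hnorm]
  have step1 : Real.exp (-(t * u)) * (1 - Real.exp (-u)) ^ n * ‖φ u‖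
      ≤ C * Real.exp (-(t / 2) * u) := by
    have e4 : Real.exp (-(t * u)) * Real.exp (t / 2 * u) = Real.exp (-(t / 2) * u) := by
      rw [← Real.exp_add]; ring_nf
    calc Real.exp (-(t * u)) * (1 - Real.exp (-u)) ^ n * ‖φ u‖
        ≤ Real.exp (-(t * u)) * 1 * (C * Real.exp (t / 2 * u)) := by
          apply mul_le_mul (mul_le_mul_of_nonneg_left e2 (Real.exp_pos _).le) hb
            (norm_nonneg _) (by positivity)
      _ = C * (Real.exp (-(t * u)) * Real.exp (t / 2 * u)) := by ring
      _ = C * Real.exp (-(t / 2) * u) := by rw [e4]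
  have step2 : Real.exp (-(t / 2) * u) ≤ u ^ (-a) := by
    have hinv : u ^ (-a) = u ^ a * u ^ (-a) * Real.exp (-(t/2) * u) +
        u ^ (-a) * (1 - u ^ a * Real.exp (-(t/2) * u)) := by ring
    have h5 : u ^ a * u ^ (-a) = 1 := by
      rw [← Real.rpow_add hu0]; simp
    calc Real.exp (-(t / 2) * u) = u ^ a * u ^ (-a) * Real.exp (-(t/2) * u) := by rw [h5, one_mul]
      _ = u ^ (-a) * (u ^ a * Real.exp (-(t/2) * u)) := by ring
      _ ≤ u ^ (-a) * 1 :=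
          mul_le_mul_of_nonneg_left hu2.le (Real.rpow_nonneg hu0.le _)
      _ = u ^ (-a) := mul_one _
  calc Real.exp (-(t * u)) * (1 - Real.exp (-u)) ^ n * ‖φ u‖
      ≤ C * Real.exp (-(t / 2) * u) := step1
    _ ≤ C * u ^ (-a) := mul_le_mul_of_nonneg_left step2 hC0

lemma ker_locInt {φ : ℝ → ℂ} (h : MemDLi φ) {t : ℝ} (ht : 0 < t) (n : ℕ) :
    LocallyIntegrableOn (Ker φ n t) (Ioi (0:ℝ)) := by
  rw [locallyIntegrableOn_iff isOpen_Ioi.isLocallyClosed]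
  intro k hk hkc
  rcases k.eq_empty_or_nonempty with rfl | hne
  · exact integrableOn_empty
  · obtain ⟨x₀, hx₀⟩ := hne
    have hkR : k ⊆ Ioo 0 (sSup k + 1) := fun x hx =>
      ⟨hk hx, lt_of_le_of_lt (le_csSup hkc.bddAbove hx) (lt_add_one _)⟩
    have hR : (0:ℝ) < sSup k + 1 := lt_trans (hk hx₀) (hkR hx₀).2
    have hφk : IntegrableOn φ k := (h.1.2.1 _ hR).mono_set hkR
    refine Integrable.mono hφk ((ker_meas h.1.1 n t).aestronglyMeasurable) ?_
    refine ae_restrict_of_forall_mem hkc.measurableSet fun u hu => ?_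
    have hu0 : (0:ℝ) < u := hk hu
    rw [ker_norm hu0.le]
    have e1 : Real.exp (-(t * u)) ≤ 1 := Real.exp_le_one_iff.mpr (by nlinarith)
    have e2 : (1 - Real.exp (-u)) ^ n ≤ 1 :=
      pow_le_one₀ (one_sub_exp_nonneg hu0.le) (by have := Real.exp_pos (-u); linarith)
    calc Real.exp (-(t * u)) * (1 - Real.exp (-u)) ^ n * ‖φ u‖
        ≤ 1 * 1 * ‖φ u‖ := by
          apply mul_le_mul (mul_le_mul e1 e2 (pow_nonneg (one_sub_exp_nonneg hu0.le) n)
            zero_le_one) le_rfl (norm_nonneg _) (by norm_num)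
      _ = ‖φ u‖ := by ring

lemma ker_mellinConv {φ : ℝ → ℂ} {γ : ℂ} (h : MemDLi φ) (hsm : SmallO φ γ) {t : ℝ} (ht : 0 < t)
    {n : ℕ} {s : ℂ} (hs : -(γ.re + n) < s.re) : MellinConvergent (Ker φ n t) s := by
  refine mellinConvergent_of_isBigO_rpow (ker_locInt h ht n)
    (ker_isBigO_top h ht n (s.re + 1)) (by linarith) ?_ hs
  simpa [neg_neg] using ker_isBigO_zero hsm ht.le n

lemma ker_mellinDiff {φ : ℝ → ℂ} {γ : ℂ} (h : MemDLi φ) (hsm : SmallO φ γ) {t : ℝ} (ht : 0 < t)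
    {n : ℕ} {s : ℂ} (hs : -(γ.re + n) < s.re) : DifferentiableAt ℂ (mellin (Ker φ n t)) s := by
  refine mellin_differentiableAt_of_isBigO_rpow (ker_locInt h ht n)
    (ker_isBigO_top h ht n (s.re + 1)) (by linarith) ?_ hs
  simpa [neg_neg] using ker_isBigO_zero hsm ht.le n

end S12

namespace S12

lemma Jf_integrand_integrable {φ : ℝ → ℂ} {γ : ℂ} (h : MemDLi φ) (hsm : SmallO φ γ)
    {t : ℝ} (ht : 0 < t) {σ : ℝ} {n : ℕ} (hσ : -γ.re < σ + n) :
    IntegrableOn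
      (fun u => Real.exp (-(t * u)) * (1 - Real.exp (-u)) ^ n * (‖φ u‖ * u ^ (σ - 1)))
      (Ioi (0:ℝ)) := by
  have hconv : MellinConvergent (Ker φ n t) ((σ : ℝ) : ℂ) :=
    ker_mellinConv h hsm ht (by simpa using by linarith)
  have hnorm := hconv.norm
  refine IntegrableOn.congr_fun hnorm ?_ measurableSet_Ioi
  intro u hu
  have hu0 : (0:ℝ) < u := hu
  have h1 : ‖((u:ℝ):ℂ) ^ (((σ:ℝ):ℂ) - 1)‖ = u ^ (σ - 1) := by
    rw [Complex.norm_cpow_eq_rpow_re_of_pos hu0]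
    norm_num
  show ‖((u:ℝ):ℂ) ^ (((σ:ℝ):ℂ) - 1) • Ker φ n t u‖
      = Real.exp (-(t * u)) * (1 - Real.exp (-u)) ^ n * (‖φ u‖ * u ^ (σ - 1))
  rw [smul_eq_mul, norm_mul, h1, ker_norm hu0.le]
  ring

lemma Jf_nonneg {φ : ℝ → ℂ} (t σ : ℝ) (n : ℕ) : 0 ≤ Jf φ t σ n := by
  apply setIntegral_nonneg measurableSet_Ioi
  intro u hu
  have hu0 : (0:ℝ) < u := hu
  have := one_sub_exp_nonneg hu0.le
  positivity

lemma mellin_norm_le {φ : ℝ → ℂ} {t : ℝ} (ht : 0 < t) (n : ℕ) (s : ℂ) :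
    ‖mellin (Ker φ n t) s‖ ≤ Jf φ t s.re n := by
  refine le_trans (norm_integral_le_integral_norm _) (le_of_eq ?_)
  apply setIntegral_congr_fun measurableSet_Ioi
  intro u hu
  have hu0 : (0:ℝ) < u := hu
  have h1 : ‖((u:ℝ):ℂ) ^ (s - 1)‖ = u ^ (s.re - 1) := by
    rw [Complex.norm_cpow_eq_rpow_re_of_pos hu0]
    norm_num
  show ‖((u:ℝ):ℂ) ^ (s - 1) • Ker φ n t u‖
      = Real.exp (-(t * u)) * (1 - Real.exp (-u)) ^ n * (‖φ u‖ * u ^ (s.re - 1))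
  rw [smul_eq_mul, norm_mul, h1, ker_norm hu0.le]
  ring

lemma Jf_mono {φ : ℝ → ℂ} {γ : ℂ} (h : MemDLi φ) (hsm : SmallO φ γ)
    {t₀ t σ : ℝ} {n : ℕ} (ht₀ : 0 < t₀) (htt : t₀ ≤ t) (hσ : -γ.re < σ + n) :
    Jf φ t σ n ≤ Jf φ t₀ σ n := by
  refine setIntegral_mono_on (Jf_integrand_integrable h hsm (lt_of_lt_of_le ht₀ htt) hσ)
    (Jf_integrand_integrable h hsm ht₀ hσ) measurableSet_Ioi fun u hu => ?_
  have hu0 : (0:ℝ) < u := hu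
  have hexp : Real.exp (-(t * u)) ≤ Real.exp (-(t₀ * u)) :=
    Real.exp_le_exp.mpr (by nlinarith)
  have hp : (0:ℝ) ≤ (1 - Real.exp (-u)) ^ n := pow_nonneg (one_sub_exp_nonneg hu0.le) n
  have hq : (0:ℝ) ≤ ‖φ u‖ * u ^ (σ - 1) :=
    mul_nonneg (norm_nonneg _) (Real.rpow_nonneg hu0.le _)
  exact mul_le_mul_of_nonneg_right (mul_le_mul_of_nonneg_right hexp hp) hq

lemma hasSum_log_aux {u : ℝ} (hu : 0 < u) :
    HasSum (fun m : ℕ => (1 - Real.exp (-u)) ^ (m + 1) / (m + 1)) u := by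
  have hx1 : |1 - Real.exp (-u)| < 1 := by
    rw [abs_of_nonneg (one_sub_exp_nonneg hu.le)]
    have := Real.exp_pos (-u); linarith
  have h := Real.hasSum_pow_div_log_of_abs_lt_one hx1
  simpa [sub_sub_cancel, Real.log_exp] using h

lemma exp_lt_one {u : ℝ} (hu : 0 < u) : Real.exp (-u) < 1 := by
  have : Real.exp (-u) < Real.exp 0 := Real.exp_lt_exp.mpr (by linarith)
  simpa using this

lemma hasSum_P {u : ℝ} (hu : 0 < u) :
    HasSum (fun m : ℕ => (1 - Real.exp (-u)) ^ m / (m + 1)) (u / (1 - Real.exp (-u))) := by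
  have hx0 : 0 < 1 - Real.exp (-u) := by have := exp_lt_one hu; linarith
  have h2 := (hasSum_log_aux hu).mul_left (1 - Real.exp (-u))⁻¹
  have h3 : (fun m : ℕ => (1 - Real.exp (-u))⁻¹ * ((1 - Real.exp (-u)) ^ (m + 1) / (m + 1)))
      = fun m : ℕ => (1 - Real.exp (-u)) ^ m / ((m : ℝ) + 1) := by
    funext m
    rw [pow_succ]
    field_simp
  rw [h3] at h2
  rwa [inv_mul_eq_div] at h2

lemma partial_log_bound {u : ℝ} (hu : 0 < u) {n₀ : ℕ} (hn₀ : 1 ≤ n₀) (K : ℕ) :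
    ∑ m ∈ Finset.range K, (1 - Real.exp (-u)) ^ (m + n₀) / ((m : ℝ) + n₀ + 1)
      ≤ (1 - Real.exp (-u)) ^ (n₀ - 1) * u := by
  set x := 1 - Real.exp (-u) with hxdef
  have hx0 : 0 ≤ x := one_sub_exp_nonneg hu.le
  have step : ∀ m : ℕ, x ^ (m + n₀) / ((m : ℝ) + n₀ + 1) ≤ x ^ (n₀ - 1) * (x ^ (m + 1) / (m + 1)) := by
    intro m
    have hpow : x ^ (m + n₀) = x ^ (n₀ - 1) * x ^ (m + 1) := by
      rw [← pow_add]; congr 1; omega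
    rw [hpow, mul_div_assoc]
    apply mul_le_mul_of_nonneg_left ?_ (pow_nonneg hx0 _)
    apply div_le_div_of_nonneg_left (pow_nonneg hx0 _) (by positivity)
    have : (1:ℝ) ≤ (n₀ : ℝ) := by exact_mod_cast hn₀
    linarith
  calc ∑ m ∈ Finset.range K, x ^ (m + n₀) / ((m : ℝ) + n₀ + 1)
      ≤ ∑ m ∈ Finset.range K, x ^ (n₀ - 1) * (x ^ (m + 1) / (m + 1)) :=
        Finset.sum_le_sum fun m _ => step m
    _ = x ^ (n₀ - 1) * ∑ m ∈ Finset.range K, x ^ (m + 1) / ((m : ℝ) + 1) := by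
        rw [Finset.mul_sum]
    _ ≤ x ^ (n₀ - 1) * u := by
        apply mul_le_mul_of_nonneg_left ?_ (pow_nonneg hx0 _)
        exact sum_le_hasSum _ (fun m _ => by positivity) (hasSum_log_aux hu)

lemma Jf_div_summable {φ : ℝ → ℂ} {γ : ℂ} (h : MemDLi φ) (hsm : SmallO φ γ)
    {t : ℝ} (ht : 0 < t) {σ : ℝ} {n₀ : ℕ} (hn₀ : 1 ≤ n₀) (hσ : -γ.re < σ + n₀) :
    Summable (fun m : ℕ => Jf φ t σ (m + n₀) / ((m : ℝ) + n₀ + 1)) := by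
  have hint : ∀ m : ℕ, IntegrableOn
      (fun u => Real.exp (-(t * u)) * (1 - Real.exp (-u)) ^ (m + n₀) * (‖φ u‖ * u ^ (σ - 1)) /
        ((m : ℝ) + n₀ + 1)) (Ioi (0:ℝ)) := by
    intro m
    apply Integrable.div_const
    apply Jf_integrand_integrable h hsm ht
    push_cast
    have : (0:ℝ) ≤ m := Nat.cast_nonneg m
    linarith
  have htarget : IntegrableOn
      (fun u => Real.exp (-(t * u)) * (1 - Real.exp (-u)) ^ 0 * (‖φ u‖ * u ^ ((σ + n₀) - 1)))
      (Ioi (0:ℝ)) := by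
    apply Jf_integrand_integrable h hsm ht
    push_cast
    linarith
  apply summable_of_sum_range_le
    (c := ∫ u in Ioi (0:ℝ),
      Real.exp (-(t * u)) * (1 - Real.exp (-u)) ^ 0 * (‖φ u‖ * u ^ ((σ + n₀) - 1)))
  · intro m
    have := Jf_nonneg (φ := φ) t σ (m + n₀)
    positivity
  · intro K
    have swap : ∑ m ∈ Finset.range K, Jf φ t σ (m + n₀) / ((m : ℝ) + n₀ + 1)
        = ∫ u in Ioi (0:ℝ), ∑ m ∈ Finset.range K,
            Real.exp (-(t * u)) * (1 - Real.exp (-u)) ^ (m + n₀) * (‖φ u‖ * u ^ (σ - 1)) /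
              ((m : ℝ) + n₀ + 1) := by
      rw [integral_finset_sum _ fun m _ => hint m]
      refine Finset.sum_congr rfl fun m _ => ?_
      rw [Jf, integral_div]
    rw [swap]
    apply setIntegral_mono_on (integrable_finset_sum _ fun m _ => hint m) htarget
      measurableSet_Ioi
    intro u hu
    have hu0 : (0:ℝ) < u := hu
    have hx0 : 0 ≤ 1 - Real.exp (-u) := one_sub_exp_nonneg hu0.le
    have hfact : ∀ m : ℕ,
        Real.exp (-(t * u)) * (1 - Real.exp (-u)) ^ (m + n₀) * (‖φ u‖ * u ^ (σ - 1)) /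
          ((m : ℝ) + n₀ + 1)
        = Real.exp (-(t * u)) * (‖φ u‖ * u ^ (σ - 1)) *
            ((1 - Real.exp (-u)) ^ (m + n₀) / ((m : ℝ) + n₀ + 1)) := by
      intro m; ring
    calc ∑ m ∈ Finset.range K,
          Real.exp (-(t * u)) * (1 - Real.exp (-u)) ^ (m + n₀) * (‖φ u‖ * u ^ (σ - 1)) /
            ((m : ℝ) + n₀ + 1)
        = Real.exp (-(t * u)) * (‖φ u‖ * u ^ (σ - 1)) *
            ∑ m ∈ Finset.range K, (1 - Real.exp (-u)) ^ (m + n₀) / ((m : ℝ) + n₀ + 1) := by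
          rw [Finset.mul_sum]
          exact Finset.sum_congr rfl fun m _ => hfact m
      _ ≤ Real.exp (-(t * u)) * (‖φ u‖ * u ^ (σ - 1)) * ((1 - Real.exp (-u)) ^ (n₀ - 1) * u) := by
          apply mul_le_mul_of_nonneg_left (partial_log_bound hu0 hn₀ K)
          have : (0:ℝ) ≤ u ^ (σ - 1) := Real.rpow_nonneg hu0.le _
          positivity
      _ ≤ Real.exp (-(t * u)) * (‖φ u‖ * u ^ (σ - 1)) * (u ^ (n₀ - 1) * u) := by
          apply mul_le_mul_of_nonneg_left
            (mul_le_mul_of_nonneg_right (pow_le_pow_left₀ hx0 one_sub_exp_le _) hu0.le)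
          have : (0:ℝ) ≤ u ^ (σ - 1) := Real.rpow_nonneg hu0.le _
          positivity
      _ = Real.exp (-(t * u)) * (1 - Real.exp (-u)) ^ 0 * (‖φ u‖ * u ^ ((σ + n₀) - 1)) := by
          have hsplit : u ^ (σ - 1) * u ^ ((n₀ - 1 : ℕ)) * u = u ^ ((σ + n₀) - 1) := by
            rw [← Real.rpow_natCast u (n₀ - 1), Nat.cast_sub hn₀, Nat.cast_one,
              ← Real.rpow_add hu0, ← Real.rpow_add_one hu0.ne']
            congr 1
            ring
          rw [pow_zero, ← hsplit]
          ring

end S12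

namespace S12

lemma rep1 {f : ℂ → ℝ → ℂ} {φ : ℝ → ℂ} {γ : ℂ} (hf : MemHwith f φ) (hsm : SmallO φ γ)
    (hγ : -1 < γ.re) {s : ℂ} (hs : 1 < s.re) :
    ∀ n : ℕ, ∀ t : ℝ, 0 < t →
      (Dh 1)^[n] (f (-s)) t = (Complex.Gamma s)⁻¹ * mellin (Ker φ n t) s := by
  have hDLi : MemDLi φ := hf.2.2.2.1
  intro n
  induction n with
  | zero =>
    intro t ht
    simp only [Function.iterate_zero, id_eq]
    rw [hf.2.2.2.2.2 s hs t (mem_Ioi.mpr ht), LM, one_div]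
    congr 1
    rw [mellin]
    congr 1
    funext u
    rw [Ker, pow_zero, mul_one, smul_eq_mul, Complex.ofReal_exp]
    push_cast
    ring
  | succ n ih =>
    intro t ht
    rw [Function.iterate_succ_apply']
    show (Dh 1)^[n] (f (-s)) (t + 1) - (Dh 1)^[n] (f (-s)) t = _
    rw [ih (t + 1) (by linarith), ih t ht, ← mul_sub]
    congr 1
    have hc1 : MellinConvergent (Ker φ n (t + 1)) s :=
      ker_mellinConv hDLi hsm (by linarith) (by have : (0:ℝ) ≤ n := Nat.cast_nonneg n; linarith)
    have hc2 : MellinConvergent (Ker φ n t) s :=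
      ker_mellinConv hDLi hsm ht (by have : (0:ℝ) ≤ n := Nat.cast_nonneg n; linarith)
    rw [mellin, mellin, mellin, ← integral_sub hc1 hc2]
    congr 1
    funext u
    rw [← smul_sub]
    congr 1
    rw [Ker, Ker, Ker, ← sub_mul]
    congr 1
    rw [← Complex.ofReal_sub]
    congr 1
    have hsplit : Real.exp (-((t + 1) * u)) = Real.exp (-(t * u)) * Real.exp (-u) := by
      rw [← Real.exp_add]; ring_nf
    rw [hsplit, pow_succ]
    ring

lemma entire {f : ℂ → ℝ → ℂ} {φ : ℝ → ℂ} (hf : MemHwith f φ) :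
    ∀ n : ℕ, ∀ t : ℝ, 0 < t → Differentiable ℂ (fun s : ℂ => (Dh 1)^[n] (f (-s)) t) := by
  intro n
  induction n with
  | zero =>
    intro t ht
    simp only [Function.iterate_zero, id_eq]
    exact (hf.2.1 t (mem_Ioi.mpr ht)).comp differentiable_id.neg
  | succ n ih =>
    intro t ht
    have e : (fun s : ℂ => (Dh 1)^[n + 1] (f (-s)) t)
        = fun s : ℂ => (Dh 1)^[n] (f (-s)) (t + 1) - (Dh 1)^[n] (f (-s)) t := by
      funext s
      rw [Function.iterate_succ_apply']
      rfl
    rw [e]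
    exact (ih (t + 1) (by linarith)).sub (ih t ht)

lemma repGen {f : ℂ → ℝ → ℂ} {φ : ℝ → ℂ} {γ : ℂ} (hf : MemHwith f φ) (hsm : SmallO φ γ)
    (hγ : -1 < γ.re) (n : ℕ) {t : ℝ} (ht : 0 < t) {s : ℂ} (hs : -(γ.re + n) < s.re) :
    (Dh 1)^[n] (f (-s)) t = (Complex.Gamma s)⁻¹ * mellin (Ker φ n t) s := by
  have hDLi : MemDLi φ := hf.2.2.2.1
  set U : Set ℂ := {z : ℂ | -(γ.re + n) < z.re} with hU
  have hUopen : IsOpen U := isOpen_lt continuous_const Complex.continuous_re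
  have hG : AnalyticOnNhd ℂ (fun z => (Dh 1)^[n] (f (-z)) t) U :=
    ((entire hf n t ht).differentiableOn).analyticOnNhd hUopen
  have hH : AnalyticOnNhd ℂ (fun z => (Complex.Gamma z)⁻¹ * mellin (Ker φ n t) z) U := by
    refine DifferentiableOn.analyticOnNhd ?_ hUopen
    intro z hz
    exact ((Complex.differentiable_one_div_Gamma z).mul
      (ker_mellinDiff hDLi hsm ht hz)).differentiableWithinAt
  have hbound : -(γ.re + n) < 1 := by
    have : (0:ℝ) ≤ n := Nat.cast_nonneg n
    linarith
  have h2 : (2:ℂ) ∈ U := by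
    simp only [hU, mem_setOf_eq]
    norm_num
    linarith
  have hev : (fun z => (Dh 1)^[n] (f (-z)) t)
      =ᶠ[nhds (2:ℂ)] (fun z => (Complex.Gamma z)⁻¹ * mellin (Ker φ n t) z) := by
    have hop : IsOpen {z : ℂ | 1 < z.re} := isOpen_lt continuous_const Complex.continuous_re
    refine Filter.eventuallyEq_of_mem (hop.mem_nhds (by norm_num)) ?_
    intro z hz
    exact rep1 hf hsm hγ hz n t ht
  exact hG.eqOn_of_preconnected_of_eventuallyEq hH
    (convex_halfSpace_re_gt _).isPreconnected h2 hev hs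

lemma BTerm_rep {f : ℂ → ℝ → ℂ} {φ : ℝ → ℂ} {γ : ℂ} (hf : MemHwith f φ) (hsm : SmallO φ γ)
    (hγ : -1 < γ.re) {n : ℕ} {t : ℝ} (ht : 0 < t) {s : ℂ} (hs : -(γ.re + n) < s.re) :
    BTerm 1 (f (-s)) n t
      = ((-1 : ℂ) ^ n / (n + 1)) * ((Complex.Gamma s)⁻¹ * mellin (Ker φ n t) s) := by
  rw [BTerm, repGen hf hsm hγ n ht hs]

lemma coeff_norm (n : ℕ) : ‖((-1 : ℂ) ^ n / (n + 1))‖ = 1 / ((n : ℝ) + 1) := by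
  rw [norm_div, norm_pow, norm_neg, norm_one, one_pow]
  congr 1
  have h : ((n : ℂ) + 1) = ((n + 1 : ℕ) : ℂ) := by push_cast; ring
  rw [h, Complex.norm_natCast]
  push_cast
  ring

lemma BTerm_bound {f : ℂ → ℝ → ℂ} {φ : ℝ → ℂ} {γ : ℂ} (hf : MemHwith f φ) (hsm : SmallO φ γ)
    (hγ : -1 < γ.re) {n : ℕ} {t₀ t : ℝ} (ht₀ : 0 < t₀) (htt : t₀ ≤ t) {s : ℂ}
    (hs : -(γ.re + n) < s.re) :
    ‖BTerm 1 (f (-s)) n t‖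
      ≤ ‖(Complex.Gamma s)⁻¹‖ * (Jf φ t₀ s.re n / ((n : ℝ) + 1)) := by
  have hDLi : MemDLi φ := hf.2.2.2.1
  have ht : 0 < t := lt_of_lt_of_le ht₀ htt
  rw [BTerm_rep hf hsm hγ ht hs, norm_mul, coeff_norm, norm_mul]
  have h1 : ‖mellin (Ker φ n t) s‖ ≤ Jf φ t₀ s.re n :=
    le_trans (mellin_norm_le ht n s) (Jf_mono hDLi hsm ht₀ htt (by linarith))
  have h2 : ‖(Complex.Gamma s)⁻¹‖ * ‖mellin (Ker φ n t) s‖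
      ≤ ‖(Complex.Gamma s)⁻¹‖ * Jf φ t₀ s.re n :=
    mul_le_mul_of_nonneg_left h1 (norm_nonneg _)
  calc (1 / ((n : ℝ) + 1)) * (‖(Complex.Gamma s)⁻¹‖ * ‖mellin (Ker φ n t) s‖)
      ≤ (1 / ((n : ℝ) + 1)) * (‖(Complex.Gamma s)⁻¹‖ * Jf φ t₀ s.re n) :=
        mul_le_mul_of_nonneg_left h2 (by positivity)
    _ = ‖(Complex.Gamma s)⁻¹‖ * (Jf φ t₀ s.re n / ((n : ℝ) + 1)) := by ring

lemma ALU {f : ℂ → ℝ → ℂ} {φ : ℝ → ℂ} {γ : ℂ} (hf : MemHwith f φ) (hsm : SmallO φ γ)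
    (hγ : -1 < γ.re) (s : ℂ) : ALUOn (BTerm 1 (f (-s))) (Ioi 0) := by
  have hDLi : MemDLi φ := hf.2.2.2.1
  obtain ⟨n₁, hn₁⟩ := exists_nat_gt (-γ.re - s.re)
  set n₀ := n₁ + 1 with hn₀def
  have hn₀1 : 1 ≤ n₀ := Nat.le_add_left 1 n₁
  have hn₀gt : -γ.re - s.re < n₀ := by
    have : (n₁ : ℝ) ≤ n₀ := by exact_mod_cast Nat.le_succ n₁
    linarith
  have hσ : -γ.re < s.re + n₀ := by linarith
  have hrep : ∀ m : ℕ, n₀ ≤ m → -(γ.re + m) < s.re := by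
    intro m hm
    have : (n₀ : ℝ) ≤ m := Nat.cast_le.mpr hm
    linarith
  constructor
  · intro t ht
    have ht0 : (0:ℝ) < t := ht
    rw [← summable_nat_add_iff n₀]
    apply Summable.of_nonneg_of_le (fun m => norm_nonneg _) ?_
      ((Jf_div_summable hDLi hsm ht0 hn₀1 hσ).mul_left ‖(Complex.Gamma s)⁻¹‖)
    intro m
    have hb := BTerm_bound hf hsm hγ ht0 le_rfl (hrep (m + n₀) (Nat.le_add_left n₀ m))
    refine le_trans hb (le_of_eq ?_)
    push_cast
    ring_nf
  · rw [tendstoLocallyUniformlyOn_iff_forall_isCompact isOpen_Ioi]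
    intro K hK hKc
    rcases K.eq_empty_or_nonempty with rfl | hne
    · intro v hv
      simp
    · have ht₀ : 0 < sInf K := hK (hKc.sInf_mem hne)
      have hKt : ∀ t ∈ K, sInf K ≤ t := fun t htK => csInf_le hKc.bddBelow htK
      set M : ℕ → ℝ := fun m =>
        if m < n₀ then 0
        else ‖(Complex.Gamma s)⁻¹‖ * (Jf φ (sInf K) s.re m / ((m : ℝ) + 1)) with hM
      have hMsum : Summable M := by
        rw [← summable_nat_add_iff n₀]
        have he : (fun m => M (m + n₀))
            = fun m => ‖(Complex.Gamma s)⁻¹‖ *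
                (Jf φ (sInf K) s.re (m + n₀) / (((m + n₀ : ℕ) : ℝ) + 1)) := by
          funext m
          rw [hM]
          simp only [Nat.not_lt.mpr (Nat.le_add_left n₀ m), if_false]
        rw [he]
        have := (Jf_div_summable hDLi hsm ht₀ hn₀1 hσ).mul_left ‖(Complex.Gamma s)⁻¹‖
        apply this.congr
        intro m
        push_cast
        ring_nf
      have hfu : ∀ᶠ m in cofinite, ∀ t ∈ K, ‖BTerm 1 (f (-s)) m t‖ ≤ M m := by
        rw [Nat.cofinite_eq_atTop, eventually_atTop]
        refine ⟨n₀, fun m hm t htK => ?_⟩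
        rw [hM]
        simp only [Nat.not_lt.mpr hm, if_false]
        exact BTerm_bound hf hsm hγ ht₀ (hKt t htK) (hrep m hm)
      intro v hv
      exact tendsto_finset_range.eventually
        (tendstoUniformlyOn_tsum_of_cofinite_eventually hMsum hfu v hv)

end S12

namespace S12

lemma Jf_le_pair {φ : ℝ → ℂ} {γ : ℂ} (h : MemDLi φ) (hsm : SmallO φ γ) {t : ℝ} (ht : 0 < t)
    {R σ : ℝ} {m : ℕ} (h1 : -R ≤ σ) (h2 : σ ≤ R) (hm : -γ.re < -R + m) :
    Jf φ t σ m ≤ Jf φ t (-R) m + Jf φ t R m := by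
  have hintσ : IntegrableOn
      (fun u => Real.exp (-(t * u)) * (1 - Real.exp (-u)) ^ m * (‖φ u‖ * u ^ (σ - 1)))
      (Ioi (0:ℝ)) := Jf_integrand_integrable h hsm ht (by linarith)
  have hint1 : IntegrableOn
      (fun u => Real.exp (-(t * u)) * (1 - Real.exp (-u)) ^ m * (‖φ u‖ * u ^ (-R - 1)))
      (Ioi (0:ℝ)) := Jf_integrand_integrable h hsm ht (by linarith)
  have hint2 : IntegrableOn
      (fun u => Real.exp (-(t * u)) * (1 - Real.exp (-u)) ^ m * (‖φ u‖ * u ^ (R - 1)))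
      (Ioi (0:ℝ)) := Jf_integrand_integrable h hsm ht (by linarith)
  have hmono : ∀ u ∈ Ioi (0:ℝ),
      Real.exp (-(t * u)) * (1 - Real.exp (-u)) ^ m * (‖φ u‖ * u ^ (σ - 1))
        ≤ Real.exp (-(t * u)) * (1 - Real.exp (-u)) ^ m * (‖φ u‖ * u ^ (-R - 1))
          + Real.exp (-(t * u)) * (1 - Real.exp (-u)) ^ m * (‖φ u‖ * u ^ (R - 1)) := by
    intro u hu
    have hu0 : (0:ℝ) < u := hu
    have hpow : u ^ (σ - 1) ≤ u ^ (-R - 1) + u ^ (R - 1) := by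
      rcases le_or_gt u 1 with hcase | hcase
      · have hle : u ^ (σ - 1) ≤ u ^ (-R - 1) :=
          Real.rpow_le_rpow_of_exponent_ge hu0 hcase (by linarith)
        have : (0:ℝ) ≤ u ^ (R - 1) := Real.rpow_nonneg hu0.le _
        linarith
      · have hle : u ^ (σ - 1) ≤ u ^ (R - 1) :=
          Real.rpow_le_rpow_of_exponent_le hcase.le (by linarith)
        have : (0:ℝ) ≤ u ^ (-R - 1) := Real.rpow_nonneg hu0.le _
        linarith
    have hc : (0:ℝ) ≤ Real.exp (-(t * u)) * (1 - Real.exp (-u)) ^ m * ‖φ u‖ := by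
      have := one_sub_exp_nonneg hu0.le
      positivity
    have := mul_le_mul_of_nonneg_left hpow hc
    calc Real.exp (-(t * u)) * (1 - Real.exp (-u)) ^ m * (‖φ u‖ * u ^ (σ - 1))
        = Real.exp (-(t * u)) * (1 - Real.exp (-u)) ^ m * ‖φ u‖ * u ^ (σ - 1) := by ring
      _ ≤ Real.exp (-(t * u)) * (1 - Real.exp (-u)) ^ m * ‖φ u‖ * (u ^ (-R - 1) + u ^ (R - 1)) :=
          this
      _ = Real.exp (-(t * u)) * (1 - Real.exp (-u)) ^ m * (‖φ u‖ * u ^ (-R - 1))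
          + Real.exp (-(t * u)) * (1 - Real.exp (-u)) ^ m * (‖φ u‖ * u ^ (R - 1)) := by ring
  calc Jf φ t σ m
      ≤ ∫ u in Ioi (0:ℝ),
          (Real.exp (-(t * u)) * (1 - Real.exp (-u)) ^ m * (‖φ u‖ * u ^ (-R - 1))
            + Real.exp (-(t * u)) * (1 - Real.exp (-u)) ^ m * (‖φ u‖ * u ^ (R - 1))) :=
        setIntegral_mono_on hintσ (hint1.add hint2) measurableSet_Ioi hmono
    _ = Jf φ t (-R) m + Jf φ t R m := integral_add hint1 hint2

lemma Bop_diff {f : ℂ → ℝ → ℂ} {φ : ℝ → ℂ} {γ : ℂ} (hf : MemHwith f φ) (hsm : SmallO φ γ)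
    (hγ : -1 < γ.re) {t : ℝ} (ht : 0 < t) :
    Differentiable ℂ (fun z : ℂ => Bop 1 (f (-z)) t) := by
  have hDLi : MemDLi φ := hf.2.2.2.1
  intro s₀
  set R : ℝ := ‖s₀‖ + 1 with hRdef
  have hR0 : 0 < R := by positivity
  have hmem : s₀ ∈ Metric.ball (0 : ℂ) R := by
    rw [mem_ball_zero_iff]
    simp [hRdef]
  suffices hsuff : DifferentiableOn ℂ (fun z : ℂ => Bop 1 (f (-z)) t) (Metric.ball 0 R) by
    exact hsuff.differentiableAt (Metric.isOpen_ball.mem_nhds hmem)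
  obtain ⟨n₁, hn₁⟩ := exists_nat_gt (R - γ.re)
  set n₀ := n₁ + 1 with hn₀def
  have hn₀1 : 1 ≤ n₀ := Nat.le_add_left 1 n₁
  have hn₀gt : R - γ.re < n₀ := by
    have : (n₁ : ℝ) ≤ n₀ := by exact_mod_cast Nat.le_succ n₁
    linarith
  have hrep : ∀ m : ℕ, n₀ ≤ m → ∀ z ∈ Metric.ball (0:ℂ) R, -(γ.re + m) < z.re := by
    intro m hm z hz
    have hzre : |z.re| < R := by
      calc |z.re| ≤ ‖z‖ := Complex.abs_re_le_norm z
        _ < R := by exact mem_ball_zero_iff.mp hz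
    have h1 : -R < z.re := by cases abs_lt.mp hzre; linarith
    have h2 : (n₀ : ℝ) ≤ m := Nat.cast_le.mpr hm
    linarith
  obtain ⟨CΓ, hCΓ⟩ := (isCompact_closedBall (0:ℂ) R).exists_bound_of_continuousOn
    (Complex.differentiable_one_div_Gamma.continuous.continuousOn)
  have hCΓ0 : 0 ≤ CΓ :=
    le_trans (norm_nonneg _) (hCΓ 0 (Metric.mem_closedBall_self hR0.le))
  set M : ℕ → ℝ := fun m =>
    if m < n₀ then 0
    else CΓ * ((Jf φ t (-R) m + Jf φ t R m) / ((m : ℝ) + 1)) with hM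
  have hMsum : Summable M := by
    rw [← summable_nat_add_iff n₀]
    have he : (fun m => M (m + n₀))
        = fun m => CΓ * ((Jf φ t (-R) (m + n₀) + Jf φ t R (m + n₀)) / (((m + n₀ : ℕ) : ℝ) + 1)) := by
      funext m
      rw [hM]
      simp only [Nat.not_lt.mpr (Nat.le_add_left n₀ m), if_false]
    rw [he]
    have hs1 : Summable (fun m : ℕ => Jf φ t (-R) (m + n₀) / ((m : ℝ) + n₀ + 1)) :=
      Jf_div_summable hDLi hsm ht hn₀1 (by linarith)
    have hs2 : Summable (fun m : ℕ => Jf φ t R (m + n₀) / ((m : ℝ) + n₀ + 1)) :=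
      Jf_div_summable hDLi hsm ht hn₀1 (by linarith)
    apply ((hs1.add hs2).mul_left CΓ).congr
    intro m
    push_cast
    ring
  have hbound : ∀ m : ℕ, n₀ ≤ m → ∀ z ∈ Metric.ball (0:ℂ) R, ‖BTerm 1 (f (-z)) m t‖ ≤ M m := by
    intro m hm z hz
    have hzrep := hrep m hm z hz
    have hzre : |z.re| < R := by
      calc |z.re| ≤ ‖z‖ := Complex.abs_re_le_norm z
        _ < R := by exact mem_ball_zero_iff.mp hz
    have hzre' := abs_lt.mp hzre
    rw [BTerm_rep hf hsm hγ ht hzrep, norm_mul, coeff_norm, norm_mul, hM]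
    simp only [Nat.not_lt.mpr hm, if_false]
    have hJ : ‖mellin (Ker φ m t) z‖ ≤ Jf φ t (-R) m + Jf φ t R m := by
      refine le_trans (mellin_norm_le ht m z) ?_
      apply Jf_le_pair hDLi hsm ht hzre'.1.le hzre'.2.le
      have : (n₀ : ℝ) ≤ m := Nat.cast_le.mpr hm
      linarith
    have hΓ : ‖(Complex.Gamma z)⁻¹‖ ≤ CΓ := hCΓ z (Metric.ball_subset_closedBall hz)
    calc (1 / ((m : ℝ) + 1)) * (‖(Complex.Gamma z)⁻¹‖ * ‖mellin (Ker φ m t) z‖)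
        ≤ (1 / ((m : ℝ) + 1)) * (CΓ * (Jf φ t (-R) m + Jf φ t R m)) := by
          apply mul_le_mul_of_nonneg_left ?_ (by positivity)
          exact mul_le_mul hΓ hJ (norm_nonneg _) hCΓ0
      _ = CΓ * ((Jf φ t (-R) m + Jf φ t R m) / ((m : ℝ) + 1)) := by ring
  have hdiffK : ∀ K : ℕ, Differentiable ℂ (fun z : ℂ => ∑ m ∈ Finset.range K, BTerm 1 (f (-z)) m t) := by
    intro K
    have he : (fun z : ℂ => ∑ m ∈ Finset.range K, BTerm 1 (f (-z)) m t)
        = fun z : ℂ => ∑ m ∈ Finset.range K, ((-1 : ℂ) ^ m / (m + 1)) * (Dh 1)^[m] (f (-z)) t :=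
      rfl
    rw [he]
    apply Differentiable.fun_sum
    intro m _
    exact (entire hf m t ht).const_mul _
  have hfu : ∀ᶠ m in cofinite, ∀ z ∈ Metric.ball (0:ℂ) R, ‖BTerm 1 (f (-z)) m t‖ ≤ M m := by
    rw [Nat.cofinite_eq_atTop, eventually_atTop]
    exact ⟨n₀, fun m hm z hz => hbound m hm z hz⟩
  have hTU : TendstoUniformlyOn
      (fun (K : ℕ) (z : ℂ) => ∑ m ∈ Finset.range K, BTerm 1 (f (-z)) m t)
      (fun z : ℂ => ∑' m : ℕ, BTerm 1 (f (-z)) m t) atTop (Metric.ball 0 R) := by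
    intro v hv
    exact tendsto_finset_range.eventually
      (tendstoUniformlyOn_tsum_of_cofinite_eventually hMsum hfu v hv)
  have := hTU.tendstoLocallyUniformlyOn.differentiableOn
    (Filter.Eventually.of_forall fun K => (hdiffK K).differentiableOn) Metric.isOpen_ball
  exact this

end S12

namespace S12

lemma ident1 {f : ℂ → ℝ → ℂ} {φ : ℝ → ℂ} {γ : ℂ} (hf : MemHwith f φ) (hsm : SmallO φ γ)
    (hγ : -1 < γ.re) {s : ℂ} (hs : 1 < s.re) (N : ℕ) {t : ℝ} (ht : 0 < t) :
    Bop 1 (f (-s)) t - Bop 1 (f (-s)) (t + N) =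
      s * ∑ n ∈ Finset.range N, f (-s - 1) (t + n) := by
  have hDLi : MemDLi φ := hf.2.2.2.1
  have htN : 0 < t + (N : ℝ) := by positivity
  have hs0 : s ≠ 0 := by
    intro h
    rw [h] at hs
    simp at hs
    linarith
  have hΓne : Complex.Gamma s ≠ 0 := by
    apply Complex.Gamma_ne_zero
    intro m hc
    have := congrArg Complex.re hc
    simp at this
    have hm : (0:ℝ) ≤ m := Nat.cast_nonneg m
    linarith
  have hΓ1ne : Complex.Gamma (s + 1) ≠ 0 := by
    apply Complex.Gamma_ne_zero
    intro m hc
    have := congrArg Complex.re hc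
    simp at this
    have hm : (0:ℝ) ≤ m := Nat.cast_nonneg m
    linarith
  have hcond : ∀ n : ℕ, -(γ.re + n) < s.re := by
    intro n
    have : (0:ℝ) ≤ n := Nat.cast_nonneg n
    linarith
  have hconv : ∀ (n : ℕ) (t' : ℝ), 0 < t' → MellinConvergent (Ker φ n t') s :=
    fun n t' ht' => ker_mellinConv hDLi hsm ht' (hcond n)
  have hsumm : ∀ t' : ℝ, 0 < t' → Summable (fun n => BTerm 1 (f (-s)) n t') :=
    fun t' ht' => ((ALU hf hsm hγ s).1 t' ht').of_norm
  -- Step A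
  have hA : Bop 1 (f (-s)) t - Bop 1 (f (-s)) (t + N)
      = ∑' n : ℕ, (BTerm 1 (f (-s)) n t - BTerm 1 (f (-s)) n (t + N)) := by
    rw [Bop, Bop]
    exact (((hsumm t ht).hasSum.sub (hsumm (t + N) htN).hasSum).tsum_eq).symm
  -- the integrand family
  set g : ℕ → ℝ → ℂ := fun n u => ((-1 : ℂ) ^ n / (n + 1)) *
      (((u : ℝ) : ℂ) ^ (s - 1) * (Ker φ n t u - Ker φ n (t + N) u)) with hg
  have hgint : ∀ n : ℕ, IntegrableOn (g n) (Ioi (0:ℝ)) := by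
    intro n
    have h1 := (hconv n t ht).sub (hconv n (t + N) htN)
    have he : g n = fun u => ((-1 : ℂ) ^ n / (n + 1)) *
        (((u : ℝ) : ℂ) ^ (s - 1) • Ker φ n t u - ((u : ℝ) : ℂ) ^ (s - 1) • Ker φ n (t + N) u) := by
      funext u
      simp only [hg, smul_eq_mul]
      ring
    rw [he]
    exact h1.const_mul _
  -- Step B
  have hterm : ∀ n : ℕ, BTerm 1 (f (-s)) n t - BTerm 1 (f (-s)) n (t + N)
      = (Complex.Gamma s)⁻¹ * ∫ u in Ioi (0:ℝ), g n u := by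
    intro n
    rw [BTerm_rep hf hsm hγ ht (hcond n), BTerm_rep hf hsm hγ htN (hcond n)]
    have hI : ∫ u in Ioi (0:ℝ), g n u
        = ((-1 : ℂ) ^ n / (n + 1)) * (mellin (Ker φ n t) s - mellin (Ker φ n (t + N)) s) := by
      have he : g n = fun u => ((-1 : ℂ) ^ n / (n + 1)) •
          (((u : ℝ) : ℂ) ^ (s - 1) • Ker φ n t u - ((u : ℝ) : ℂ) ^ (s - 1) • Ker φ n (t + N) u) := by
        funext u
        simp only [hg, smul_eq_mul]
        ring
      rw [he, integral_smul, integral_sub (hconv n t ht) (hconv n (t + N) htN), smul_eq_mul,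
        mellin, mellin]
    rw [hI]
    ring
  -- Step C : summability of norms of integrals
  have hJsummable : Summable (fun n : ℕ => Jf φ t s.re n / ((n : ℝ) + 1)) := by
    rw [← summable_nat_add_iff 1]
    have h2 := Jf_div_summable hDLi hsm ht (le_refl 1) (σ := s.re) (by linarith)
    apply h2.congr
    intro m
    push_cast
    ring
  have hgnormle : ∀ n : ℕ, (∫ u in Ioi (0:ℝ), ‖g n u‖) ≤ Jf φ t s.re n / ((n : ℝ) + 1) := by
    intro n
    have hint2 : IntegrableOn (fun u =>
        Real.exp (-(t * u)) * (1 - Real.exp (-u)) ^ n * (‖φ u‖ * u ^ (s.re - 1)) / ((n : ℝ) + 1))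
        (Ioi (0:ℝ)) := (Jf_integrand_integrable hDLi hsm ht (by
          have : (0:ℝ) ≤ n := Nat.cast_nonneg n
          linarith)).div_const _
    have hpt : ∀ u ∈ Ioi (0:ℝ), ‖g n u‖ ≤
        Real.exp (-(t * u)) * (1 - Real.exp (-u)) ^ n * (‖φ u‖ * u ^ (s.re - 1)) / ((n : ℝ) + 1) := by
      intro u hu
      have hu0 : (0:ℝ) < u := hu
      have hkdiff : Ker φ n t u - Ker φ n (t + N) u
          = (((Real.exp (-(t * u)) - Real.exp (-((t + N) * u))) * (Real.exp (-u) - 1) ^ n : ℝ) : ℂ)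
            * φ u := by
        rw [Ker, Ker]
        push_cast
        ring
      have hcpnorm : ‖((u : ℝ) : ℂ) ^ (s - 1)‖ = u ^ (s.re - 1) := by
        rw [Complex.norm_cpow_eq_rpow_re_of_pos hu0]
        norm_num
      have hdnn : 0 ≤ Real.exp (-(t * u)) - Real.exp (-((t + N) * u)) := by
        have : Real.exp (-((t + N) * u)) ≤ Real.exp (-(t * u)) := by
          apply Real.exp_le_exp.mpr
          have : (0:ℝ) ≤ N := Nat.cast_nonneg N
          nlinarith
        linarith
      have habs : |(Real.exp (-(t * u)) - Real.exp (-((t + N) * u))) * (Real.exp (-u) - 1) ^ n|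
          = (Real.exp (-(t * u)) - Real.exp (-((t + N) * u))) * (1 - Real.exp (-u)) ^ n := by
        rw [abs_mul, _root_.abs_pow, abs_of_nonneg hdnn,
          abs_of_nonpos (sub_nonpos.mpr (exp_neg_le_one hu0.le)), neg_sub]
      rw [hg]
      simp only
      rw [norm_mul, coeff_norm, norm_mul, hcpnorm, hkdiff, norm_mul, Complex.norm_real,
        Real.norm_eq_abs, habs]
      have hfinal : (Real.exp (-(t * u)) - Real.exp (-((t + N) * u))) * (1 - Real.exp (-u)) ^ n
            * ‖φ u‖ ≤ Real.exp (-(t * u)) * (1 - Real.exp (-u)) ^ n * ‖φ u‖ := by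
        apply mul_le_mul_of_nonneg_right (mul_le_mul_of_nonneg_right (by
          have := Real.exp_pos (-((t + N) * u))
          linarith) (pow_nonneg (one_sub_exp_nonneg hu0.le) n)) (norm_nonneg _)
      have hrp : (0:ℝ) ≤ u ^ (s.re - 1) := Real.rpow_nonneg hu0.le _
      calc 1 / ((n : ℝ) + 1) * (u ^ (s.re - 1) *
            ((Real.exp (-(t * u)) - Real.exp (-((t + N) * u))) * (1 - Real.exp (-u)) ^ n * ‖φ u‖))
          ≤ 1 / ((n : ℝ) + 1) * (u ^ (s.re - 1) *
            (Real.exp (-(t * u)) * (1 - Real.exp (-u)) ^ n * ‖φ u‖)) := by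
            apply mul_le_mul_of_nonneg_left (mul_le_mul_of_nonneg_left hfinal hrp) (by positivity)
        _ = Real.exp (-(t * u)) * (1 - Real.exp (-u)) ^ n * (‖φ u‖ * u ^ (s.re - 1)) /
            ((n : ℝ) + 1) := by ring
    calc (∫ u in Ioi (0:ℝ), ‖g n u‖)
        ≤ ∫ u in Ioi (0:ℝ),
            Real.exp (-(t * u)) * (1 - Real.exp (-u)) ^ n * (‖φ u‖ * u ^ (s.re - 1)) /
              ((n : ℝ) + 1) :=
          setIntegral_mono_on ((hgint n).norm) hint2 measurableSet_Ioi hpt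
      _ = Jf φ t s.re n / ((n : ℝ) + 1) := by rw [integral_div]; rfl
  have hsumnorm : Summable (fun n : ℕ => ∫ u in Ioi (0:ℝ), ‖g n u‖) :=
    Summable.of_nonneg_of_le (fun n => integral_nonneg fun u => norm_nonneg _)
      hgnormle hJsummable
  -- Step D : swap sum and integral
  have hswap : (∑' n : ℕ, ∫ u in Ioi (0:ℝ), g n u) = ∫ u in Ioi (0:ℝ), ∑' n : ℕ, g n u :=
    integral_tsum_of_summable_integral_norm hgint hsumnorm
  -- Step E : pointwise sum
  have hpt2 : EqOn (fun u : ℝ => ∑' n : ℕ, g n u)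
      (fun u : ℝ => ∑ k ∈ Finset.range N, ((u : ℝ) : ℂ) ^ ((s + 1) - 1) • Ker φ 0 (t + k) u)
      (Ioi (0:ℝ)) := by
    intro u hu
    have hu0 : (0:ℝ) < u := hu
    have hx0 : 0 < 1 - Real.exp (-u) := by have := exp_lt_one hu0; linarith
    have hP := (hasSum_P hu0).mapL Complex.ofRealCLM
    have hPS := hP.mul_left (((u : ℝ) : ℂ) ^ (s - 1) *
      (((Real.exp (-(t * u)) - Real.exp (-((t + N) * u)) : ℝ) : ℂ) * φ u))
    have hfun : (fun n : ℕ => (((u : ℝ) : ℂ) ^ (s - 1) *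
          (((Real.exp (-(t * u)) - Real.exp (-((t + N) * u)) : ℝ) : ℂ) * φ u)) *
          Complex.ofRealCLM ((1 - Real.exp (-u)) ^ n / (n + 1)))
        = fun n : ℕ => g n u := by
      funext n
      have hkdiff : Ker φ n t u - Ker φ n (t + N) u
          = (((Real.exp (-(t * u)) - Real.exp (-((t + N) * u))) * (Real.exp (-u) - 1) ^ n : ℝ) : ℂ)
            * φ u := by
        rw [Ker, Ker]
        push_cast
        ring
      have hsign' : ((1 : ℂ) - Complex.exp (-(u : ℂ))) ^ n
          = (-1 : ℂ) ^ n * (Complex.exp (-(u : ℂ)) - 1) ^ n := by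
        rw [← mul_pow]
        congr 1
        ring
      simp only [hg, Complex.ofRealCLM_apply, hkdiff]
      push_cast
      rw [hsign']
      ring
    rw [hfun] at hPS
    show (∑' n : ℕ, g n u) = _
    rw [hPS.tsum_eq]
    -- evaluate the closed form
    have hgeom : (∑ i ∈ Finset.range N, Real.exp (-u) ^ i) * (1 - Real.exp (-u))
        = 1 - Real.exp (-u) ^ N := by
      have hgs := geom_sum_mul (Real.exp (-u)) N
      ring_nf
      ring_nf at hgs
      linarith
    have hdN : Real.exp (-((t + N) * u)) = Real.exp (-(t * u)) * Real.exp (-u) ^ N := by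
      rw [← Real.exp_nat_mul, ← Real.exp_add]
      congr 1
      ring
    have hreal : (Real.exp (-(t * u)) - Real.exp (-((t + N) * u))) * (u / (1 - Real.exp (-u)))
        = u * ∑ k ∈ Finset.range N, Real.exp (-((t + k) * u)) := by
      have hstep : (Real.exp (-(t * u)) - Real.exp (-((t + N) * u)))
          = Real.exp (-(t * u)) * ((∑ i ∈ Finset.range N, Real.exp (-u) ^ i) *
            (1 - Real.exp (-u))) := by
        rw [hgeom, hdN]
        ring
      have hsum2 : ∑ k ∈ Finset.range N, Real.exp (-((t + (k:ℝ)) * u))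
          = Real.exp (-(t * u)) * ∑ k ∈ Finset.range N, Real.exp (-u) ^ k := by
        rw [Finset.mul_sum]
        apply Finset.sum_congr rfl
        intro k _
        rw [← Real.exp_nat_mul, ← Real.exp_add]
        congr 1
        ring
      rw [hstep, hsum2]
      field_simp
    have hcp : ((u : ℝ) : ℂ) ^ (s - 1) * ((u : ℝ) : ℂ) = ((u : ℝ) : ℂ) ^ ((s + 1) - 1) := by
      have hne : ((u : ℝ) : ℂ) ≠ 0 := Complex.ofReal_ne_zero.mpr hu0.ne'
      rw [show (s + 1) - 1 = (s - 1) + 1 by ring, Complex.cpow_add _ _ hne, Complex.cpow_one]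
    have hofreal : (Complex.ofRealCLM (u / (1 - Real.exp (-u))) : ℂ)
        = ((u / (1 - Real.exp (-u)) : ℝ) : ℂ) := rfl
    rw [hofreal]
    have hkey : (((Real.exp (-(t * u)) - Real.exp (-((t + N) * u)) : ℝ) : ℂ)) *
        ((u / (1 - Real.exp (-u)) : ℝ) : ℂ)
        = ((u : ℝ) : ℂ) * ((∑ k ∈ Finset.range N, Real.exp (-((t + k) * u)) : ℝ) : ℂ) := by
      rw [← Complex.ofReal_mul, ← Complex.ofReal_mul, hreal]
    calc ((u : ℝ) : ℂ) ^ (s - 1) *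
          (((Real.exp (-(t * u)) - Real.exp (-((t + N) * u)) : ℝ) : ℂ) * φ u) *
          ((u / (1 - Real.exp (-u)) : ℝ) : ℂ)
        = ((u : ℝ) : ℂ) ^ (s - 1) *
          ((((Real.exp (-(t * u)) - Real.exp (-((t + N) * u)) : ℝ) : ℂ)) *
            ((u / (1 - Real.exp (-u)) : ℝ) : ℂ)) * φ u := by ring
      _ = ((u : ℝ) : ℂ) ^ (s - 1) * (((u : ℝ) : ℂ) *
            ((∑ k ∈ Finset.range N, Real.exp (-((t + k) * u)) : ℝ) : ℂ)) * φ u := by rw [hkey]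
      _ = ((u : ℝ) : ℂ) ^ ((s + 1) - 1) *
            ((∑ k ∈ Finset.range N, Real.exp (-((t + k) * u)) : ℝ) : ℂ) * φ u := by
          rw [← hcp]; ring
      _ = ∑ k ∈ Finset.range N, ((u : ℝ) : ℂ) ^ ((s + 1) - 1) • Ker φ 0 (t + k) u := by
          push_cast
          rw [Finset.mul_sum, Finset.sum_mul]
          apply Finset.sum_congr rfl
          intro k _
          rw [Ker, pow_zero, mul_one, smul_eq_mul]
          push_cast
          ring
  -- Step F : integral of pointwise sum
  have hconvk : ∀ k : ℕ, MellinConvergent (Ker φ 0 (t + (k:ℝ))) (s + 1) := by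
    intro k
    apply ker_mellinConv hDLi hsm (by positivity)
    simp only [Nat.cast_zero, add_zero, Complex.add_re, Complex.one_re]
    linarith
  have hIeq : (∫ u in Ioi (0:ℝ), ∑' n : ℕ, g n u)
      = ∑ k ∈ Finset.range N, mellin (Ker φ 0 (t + k)) (s + 1) := by
    rw [setIntegral_congr_fun measurableSet_Ioi hpt2]
    rw [integral_finset_sum _ fun k _ => hconvk k]
    rfl
  -- Step G : representation at s+1
  have hs1re : 1 < (s + 1).re := by
    simp only [Complex.add_re, Complex.one_re]
    linarith
  have hrepk : ∀ k ∈ Finset.range N,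
      mellin (Ker φ 0 (t + (k:ℝ))) (s + 1) = Complex.Gamma (s + 1) * f (-(s + 1)) (t + k) := by
    intro k _
    have htk : 0 < t + (k : ℝ) := by positivity
    have hrk := rep1 hf hsm hγ hs1re 0 (t + k) htk
    simp only [Function.iterate_zero, id_eq] at hrk
    rw [hrk, ← mul_assoc, mul_inv_cancel₀ hΓ1ne, one_mul]
  -- final assembly
  rw [hA]
  calc (∑' n : ℕ, (BTerm 1 (f (-s)) n t - BTerm 1 (f (-s)) n (t + N)))
      = ∑' n : ℕ, (Complex.Gamma s)⁻¹ * ∫ u in Ioi (0:ℝ), g n u := tsum_congr hterm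
    _ = (Complex.Gamma s)⁻¹ * ∑' n : ℕ, ∫ u in Ioi (0:ℝ), g n u := tsum_mul_left
    _ = (Complex.Gamma s)⁻¹ * ∫ u in Ioi (0:ℝ), ∑' n : ℕ, g n u := by rw [hswap]
    _ = (Complex.Gamma s)⁻¹ * ∑ k ∈ Finset.range N, mellin (Ker φ 0 (t + k)) (s + 1) := by
        rw [hIeq]
    _ = (Complex.Gamma s)⁻¹ * ∑ k ∈ Finset.range N, Complex.Gamma (s + 1) * f (-(s + 1)) (t + k) := by
        rw [Finset.sum_congr rfl hrepk]
    _ = s * ∑ n ∈ Finset.range N, f (-s - 1) (t + n) := by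
        rw [← Finset.mul_sum, Complex.Gamma_add_one s hs0]
        rw [show -(s + 1) = -s - 1 by ring]
        field_simp

end S12


end

/-- for `f ∈ ℋ` with `f(−1,·) = ℒ(φ)` and `φ(u) = o(u^γ)` as `u → 0⁺`,
`Re γ > −1`: for every `N ∈ ℕ`, every `s ∈ ℂ`, and every `t > 0`,
`s Σ_{n=0}^{N−1} f(−s−1, t+n) = (B f_{−s})(t) − (B f_{−s})(t+N)`, the Bernoulli series of
`f_{−s}` converging absolutely and locally uniformly on `(0,∞)`. -/
theorem stmt12 (f : ℂ → ℝ → ℂ) (φ : ℝ → ℂ) (hf : MemHwith f φ)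
    (γ : ℂ) (hγ : -1 < γ.re) (hsm : SmallO φ γ) :
    ∀ s : ℂ,
      ALUOn (BTerm 1 (f (-s))) (Ioi 0) ∧
      ∀ N : ℕ, ∀ t ∈ Ioi (0:ℝ),
        s * ∑ n ∈ Finset.range N, f (-s - 1) (t + n) =
          Bop 1 (f (-s)) t - Bop 1 (f (-s)) (t + N) := by
  intro s
  refine ⟨S12.ALU hf hsm hγ s, ?_⟩
  intro N t ht
  have ht0 : (0:ℝ) < t := ht
  have htN : (0:ℝ) < t + N := by positivity
  have hA : Differentiable ℂ (fun z : ℂ => z * ∑ n ∈ Finset.range N, f (-z - 1) (t + n)) := by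
    apply differentiable_id.mul
    apply Differentiable.fun_sum
    intro n _
    have htn : (0:ℝ) < t + n := by positivity
    exact (hf.2.1 (t + n) (mem_Ioi.mpr htn)).comp (differentiable_id.neg.sub_const 1)
  have hB : Differentiable ℂ (fun z : ℂ => Bop 1 (f (-z)) t - Bop 1 (f (-z)) (t + N)) :=
    (S12.Bop_diff hf hsm hγ ht0).sub (S12.Bop_diff hf hsm hγ htN)
  have hev : (fun z : ℂ => z * ∑ n ∈ Finset.range N, f (-z - 1) (t + n))
      =ᶠ[nhds (2:ℂ)] (fun z : ℂ => Bop 1 (f (-z)) t - Bop 1 (f (-z)) (t + N)) := by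
    have hop : IsOpen {z : ℂ | 1 < z.re} := isOpen_lt continuous_const Complex.continuous_re
    refine Filter.eventuallyEq_of_mem (hop.mem_nhds (by norm_num)) ?_
    intro z hz
    exact (S12.ident1 hf hsm hγ hz N ht0).symm
  have heq := (hA.differentiableOn.analyticOnNhd
      isOpen_univ).eqOn_of_preconnected_of_eventuallyEq
    (hB.differentiableOn.analyticOnNhd isOpen_univ) isPreconnected_univ
    (mem_univ (2:ℂ)) hev
  exact heq (mem_univ s)
end
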